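/- arXiv:1301.4518 — 7 statements merged into one kernel-verified Lean document; each statement's English description precedes it below -/
import Mathlib

section
/- The number of elements of the right planar rook monoid RP_n equals the Catalan number C_{n+1} = binomial(2n+2, n+1)/(n+2). -/
/-- A partial map on `Fin n`, representing a rook-type diagram: the function
goes from the top row of vertices to the bottom row. -/
abbrev PMap (n : ℕ) := Fin n → Option (Fin n)

/-- Diagram multiplication `f ⬝ g`: stack `f` on top of `g`, i.e. apply `f` first. -/
def pcomp {n : ℕ} (f g : PMap n) : PMap n := fun i => (f i).bind g

/-- The identity diagram. -/
def pid (n : ℕ) : PMap n := fun i => some i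

infixl:70 " ⬝ " => pcomp

/-- The generator `r i` (0-indexed): sends vertex `i+1` on top to vertex `i`
on the bottom, is undefined at `i`, and fixes all other vertices. -/
def rmap (n i : ℕ) : PMap n := fun j =>
  if (j : ℕ) = i then none
  else if (j : ℕ) = i + 1 then (if h : i < n then some ⟨i, h⟩ else none)
  else some j

/-- The generator `l i` (0-indexed): sends vertex `i` on top to vertex `i+1`
on the bottom, is undefined at `i+1`, and fixes all other vertices. -/
def lmap (n i : ℕ) : PMap n := fun j =>
  if (j : ℕ) = i + 1 then none
  else if (j : ℕ) = i then (if h : i + 1 < n then some ⟨i + 1, h⟩ else none)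
  else some j

/-- The idempotent `p i` (0-indexed): the partial identity undefined at vertex `i`. -/
def pmapd (n i : ℕ) : PMap n := fun j =>
  if (j : ℕ) = i then none else some j

/-- `f` is a partial injection. -/
def IsInj {n : ℕ} (f : PMap n) : Prop :=
  ∀ i j a, f i = some a → f j = some a → i = j

/-- `f` is order-preserving on its domain. -/
def IsOrd {n : ℕ} (f : PMap n) : Prop :=
  ∀ i j a b, f i = some a → f j = some b → i < j → a < b

/-- Right-planar condition: each bottom endpoint is weakly to the left of its top endpoint. -/
def IsRtop {n : ℕ} (f : PMap n) : Prop := ∀ i a, f i = some a → a ≤ i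

/-- Left-planar condition: each bottom endpoint is weakly to the right of its top endpoint. -/
def IsLtop {n : ℕ} (f : PMap n) : Prop := ∀ i a, f i = some a → i ≤ a

/-!
An element of `RP_n` is determined by its domain `A` and range `B`: it is the unique
order-preserving bijection `A → B`. The condition `f a ≤ a` then says exactly that every initial
segment `[0, i)` contains at least as many elements of `B` as of `A`. Encoding `i ∈ B` by an up
step and `i ∈ A` by a down step, and interleaving them (with the complementary steps for
non-members) between an initial `U` and a final `D`, turns such pairs bijectively into the Dyck
words of semilength `n + 1`, of which there are `C_{n+1}`.
-/

open Finset DyckStep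

theorem IsOrd.isInj {n : ℕ} {f : PMap n} (h : IsOrd f) : IsInj f := by
  intro i j a hi hj
  by_contra hij
  rcases lt_or_gt_of_ne hij with hlt | hlt
  · exact lt_irrefl a (h i j a a hi hj hlt)
  · exact lt_irrefl a (h j i a a hj hi hlt)

lemma DyckWord.getElem?_zero {p : DyckWord} (hp : p ≠ 0) : p.toList[0]? = some DyckStep.U := by
  rw [← List.head?_eq_getElem?, List.head?_eq_some_head (DyckWord.toList_ne_nil.2 hp),
    p.head_eq_U]

lemma DyckWord.getElem?_length_sub_one {p : DyckWord} (hp : p ≠ 0) :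
    p.toList[p.toList.length - 1]? = some DyckStep.D := by
  rw [← List.getLast?_eq_getElem?, List.getLast?_eq_some_getLast (DyckWord.toList_ne_nil.2 hp),
    p.getLast_eq_D]

namespace RightPlanarRook

variable {n : ℕ}

def prefixCount (S : Finset (Fin n)) (i : ℕ) : ℕ := #(S.filter fun x => x.val < i)

lemma prefixCount_succ (S : Finset (Fin n)) (x : Fin n) :
    prefixCount S (x + 1) = prefixCount S x + if x ∈ S then 1 else 0 := by
  rw [prefixCount, prefixCount, card_filter, card_filter, ← sum_ite_eq' S x (fun _ => 1),
    ← sum_add_distrib]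
  refine sum_congr rfl fun y _ => ?_
  simp only [Fin.ext_iff]
  split_ifs <;> omega

lemma prefixCount_le_self (S : Finset (Fin n)) (i : ℕ) : prefixCount S i ≤ i :=
  (card_le_card_of_injOn Fin.val (fun x hx => by simpa using (mem_filter.1 hx).2)
    Fin.val_injective.injOn).trans_eq (card_range i)

lemma prefixCount_of_le (S : Finset (Fin n)) {i : ℕ} (h : n ≤ i) : prefixCount S i = #S := by
  rw [prefixCount, filter_true_of_mem fun x _ => x.2.trans_le h]

def dom (f : PMap n) : Finset (Fin n) := {i | (f i).isSome}

def ran (f : PMap n) : Finset (Fin n) := {b | ∃ i, f i = some b}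

lemma mem_dom {f : PMap n} {i : Fin n} : i ∈ dom f ↔ ∃ b, f i = some b := by
  simp [dom, Option.isSome_iff_exists]

lemma mem_ran {f : PMap n} {b : Fin n} : b ∈ ran f ↔ ∃ i, f i = some b := by
  simp [ran]

lemma prefixCount_dom_le_ran {f : PMap n} (hf : IsInj f) (hr : IsRtop f) (i : ℕ) :
    prefixCount (dom f) i ≤ prefixCount (ran f) i := by
  refine card_le_card_of_forall_subsingleton (fun x b => f x = some b) (fun x hx => ?_)
    fun b _ x₁ hx₁ x₂ hx₂ => hf _ _ _ hx₁.2 hx₂.2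
  obtain ⟨hx, hxi⟩ := mem_filter.1 hx
  obtain ⟨b, hb⟩ := mem_dom.1 hx
  exact ⟨b, mem_filter.2 ⟨mem_ran.2 ⟨x, hb⟩, lt_of_le_of_lt (hr x b hb) hxi⟩, hb⟩

lemma isRtop_of_prefixCount_le {f : PMap n} (ho : IsOrd f)
    (h : ∀ i, prefixCount (dom f) i ≤ prefixCount (ran f) i) : IsRtop f := by
  intro x b hxb
  by_contra! hxb_lt
  -- Every `b' ≤ x` in the range has its preimage strictly below `x`, since `f x = b > x`.
  have hran : prefixCount (ran f) (x + 1) ≤ prefixCount (dom f) x := by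
    refine card_le_card_of_forall_subsingleton (fun b' x' => f x' = some b') (fun b' hb' => ?_)
      fun x' _ b₁ hb₁ b₂ hb₂ => Option.some.inj (hb₁.2.symm.trans hb₂.2)
    obtain ⟨hb', hb'x⟩ := mem_filter.1 hb'
    obtain ⟨x', hx'⟩ := mem_ran.1 hb'
    refine ⟨x', mem_filter.2 ⟨mem_dom.2 ⟨b', hx'⟩, ?_⟩, hx'⟩
    by_contra! hxx'
    have hbb' : b ≤ b' := by
      rcases (Fin.le_iff_val_le_val.2 hxx').lt_or_eq with hlt | rfl
      · exact (ho x x' b b' hxb hx' hlt).le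
      · exact (Option.some.inj (hxb.symm.trans hx')).le
    have : (b : ℕ) ≤ b' := hbb'
    have : (x : ℕ) < b := hxb_lt
    omega
  have := h (x + 1)
  rw [prefixCount_succ, if_pos (mem_dom.2 ⟨b, hxb⟩)] at this
  omega

section OfDomRan

def ofDomRan (A B : Finset (Fin n)) (h : #A = #B) : PMap n := fun i =>
  if hi : i ∈ A then some (B.orderEmbOfFin h.symm ((A.orderIsoOfFin rfl).symm ⟨i, hi⟩)) else none

variable {A B : Finset (Fin n)} {h : #A = #B}

lemma ofDomRan_orderEmbOfFin (j : Fin #A) :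
    ofDomRan A B h (A.orderEmbOfFin rfl j) = some (B.orderEmbOfFin h.symm j) := by
  rw [ofDomRan, dif_pos (A.orderEmbOfFin_mem rfl j)]
  congr
  rw [OrderIso.symm_apply_eq]
  exact Subtype.ext (A.coe_orderIsoOfFin_apply rfl j).symm

lemma exists_of_ofDomRan_eq_some {i b : Fin n} (hib : ofDomRan A B h i = some b) :
    ∃ j, A.orderEmbOfFin rfl j = i ∧ B.orderEmbOfFin h.symm j = b := by
  rw [ofDomRan] at hib
  split_ifs at hib with hi
  exact ⟨_, by rw [← coe_orderIsoOfFin_apply, OrderIso.apply_symm_apply], Option.some.inj hib⟩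

lemma isOrd_ofDomRan : IsOrd (ofDomRan A B h) := by
  intro i i' b b' hb hb' hii'
  obtain ⟨j, rfl, rfl⟩ := exists_of_ofDomRan_eq_some hb
  obtain ⟨j', rfl, rfl⟩ := exists_of_ofDomRan_eq_some hb'
  exact (B.orderEmbOfFin h.symm).strictMono ((A.orderEmbOfFin rfl).lt_iff_lt.1 hii')

lemma dom_ofDomRan : dom (ofDomRan A B h) = A := by
  ext i
  by_cases hi : i ∈ A <;> simp [dom, ofDomRan, hi]

lemma ran_ofDomRan : ran (ofDomRan A B h) = B := by
  ext b
  refine mem_ran.trans ⟨fun ⟨i, hib⟩ => ?_, fun hb => ?_⟩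
  · obtain ⟨j, -, rfl⟩ := exists_of_ofDomRan_eq_some hib
    exact B.orderEmbOfFin_mem h.symm j
  · obtain ⟨j, rfl⟩ : b ∈ Set.range (B.orderEmbOfFin h.symm) := by
      rwa [range_orderEmbOfFin]
    exact ⟨_, ofDomRan_orderEmbOfFin j⟩

lemma card_dom_eq_card_ran {f : PMap n} (hf : IsInj f) : #(dom f) = #(ran f) := by
  refine card_bij (fun i hi => (f i).get (by simpa [dom] using hi))
    (fun i _ => mem_ran.2 ⟨i, (Option.some_get _).symm⟩)
    (fun i₁ _ i₂ _ he => hf i₁ i₂ _ (by rw [← he, Option.some_get]) (Option.some_get _).symm)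
    fun b hb => ?_
  · obtain ⟨i, hi⟩ := mem_ran.1 hb
    exact ⟨i, mem_dom.2 ⟨b, hi⟩, by simp [hi]⟩

lemma eq_ofDomRan {f : PMap n} (hf : IsOrd f) :
    f = ofDomRan (dom f) (ran f) (card_dom_eq_card_ran hf.isInj) := by
  set a := (dom f).orderEmbOfFin rfl
  have ha : ∀ j, (f (a j)).isSome := fun j => by
    simpa [a, dom] using (dom f).orderEmbOfFin_mem rfl j
  have hb : (fun j => (f (a j)).get (ha j)) =
      (ran f).orderEmbOfFin (card_dom_eq_card_ran hf.isInj).symm :=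
    orderEmbOfFin_unique _ (fun j => mem_ran.2 ⟨a j, (Option.some_get _).symm⟩)
      fun j j' hjj' => hf _ _ _ _ (Option.some_get _).symm (Option.some_get _).symm
        (a.strictMono hjj')
  funext i
  by_cases hi : i ∈ dom f
  · obtain ⟨j, rfl⟩ : i ∈ Set.range a := by rwa [range_orderEmbOfFin]
    rw [ofDomRan_orderEmbOfFin, ← hb, Option.some_get]
  · rw [ofDomRan, dif_neg hi]
    simpa [dom] using hi

end OfDomRan

def IsBallotPair (A B : Finset (Fin n)) : Prop :=
  #A = #B ∧ ∀ i, prefixCount A i ≤ prefixCount B i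

variable (n) in
def rightPlanarEquivBallotPair : {f : PMap n // IsInj f ∧ IsOrd f ∧ IsRtop f} ≃
    {q : Finset (Fin n) × Finset (Fin n) // IsBallotPair q.1 q.2} where
  toFun f := ⟨(dom f.1, ran f.1), card_dom_eq_card_ran f.2.1,
    prefixCount_dom_le_ran f.2.1 f.2.2.2⟩
  invFun q := ⟨ofDomRan q.1.1 q.1.2 q.2.1, isOrd_ofDomRan.isInj, isOrd_ofDomRan,
    isRtop_of_prefixCount_le isOrd_ofDomRan (by rw [dom_ofDomRan, ran_ofDomRan]; exact q.2.2)⟩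
  left_inv f := Subtype.ext (eq_ofDomRan f.2.2.1).symm
  right_inv q := Subtype.ext (Prod.ext (dom_ofDomRan (h := q.2.1)) (ran_ofDomRan (h := q.2.1)))

section BallotWord

/-- Step `m` of the word `U b₀ a₀ b₁ a₁ ⋯ b₍ₙ₋₁₎ a₍ₙ₋₁₎ D`, where `bᵢ = U ↔ i ∈ B` and
`aᵢ = D ↔ i ∈ A`. -/
def ballotStep (A B : Finset (Fin n)) : ℕ → DyckStep
  | 0 => U
  | m + 1 =>
    if h : m / 2 < n then
      if m % 2 = 0 then (if ⟨m / 2, h⟩ ∈ B then U else D) else (if ⟨m / 2, h⟩ ∈ A then D else U)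
    else D

def ballotWord (A B : Finset (Fin n)) : List DyckStep :=
  (List.range (2 * n + 2)).map (ballotStep A B)

variable {A B : Finset (Fin n)}

lemma ballotStep_two_mul_add_one (x : Fin n) :
    ballotStep A B (2 * x + 1) = if x ∈ B then U else D := by
  simp [ballotStep, Nat.mul_div_cancel_left _ two_pos]

lemma ballotStep_two_mul_add_two (x : Fin n) :
    ballotStep A B (2 * x + 2) = if x ∈ A then D else U := by
  have h₁ : (2 * (x : ℕ) + 1) / 2 = x := by omega
  have h₂ : (2 * (x : ℕ) + 1) % 2 = 1 := by omega
  simp [ballotStep, h₁, h₂]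

lemma ballotStep_last : ballotStep A B (2 * n + 1) = D := by
  simp [ballotStep, Nat.mul_div_cancel_left _ two_pos]

variable (A B) in
lemma count_map_ballotStep_range (i : ℕ) (hi : i ≤ n) :
    ((List.range (2 * i + 1)).map (ballotStep A B)).count U =
        1 + prefixCount B i + (i - prefixCount A i) ∧
      ((List.range (2 * i + 1)).map (ballotStep A B)).count D =
        prefixCount A i + (i - prefixCount B i) := by
  induction i with
  | zero => simp [ballotStep, prefixCount]
  | succ i ih =>
    obtain ⟨ihU, ihD⟩ := ih (by omega)
    have hA := prefixCount_le_self A i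
    have hB := prefixCount_le_self B i
    let x : Fin n := ⟨i, hi⟩
    have hA' : prefixCount A (i + 1) = prefixCount A i + if x ∈ A then 1 else 0 :=
      prefixCount_succ A x
    have hB' : prefixCount B (i + 1) = prefixCount B i + if x ∈ B then 1 else 0 :=
      prefixCount_succ B x
    have hU : ballotStep A B (2 * i + 1) = if x ∈ B then U else D := ballotStep_two_mul_add_one x
    have hD : ballotStep A B (2 * i + 2) = if x ∈ A then D else U := ballotStep_two_mul_add_two x
    rw [show 2 * (i + 1) + 1 = 2 * i + 1 + 1 + 1 by ring, List.range_succ, List.range_succ]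
    simp only [List.map_append, List.count_append, ihU, ihD, List.map_cons, List.map_nil, hU, hD,
      hA', hB']
    by_cases hxA : x ∈ A <;> by_cases hxB : x ∈ B <;> simp [hxA, hxB] <;> omega

lemma ballotWord_eq_append :
    ballotWord A B = (List.range (2 * n + 1)).map (ballotStep A B) ++ [D] := by
  rw [ballotWord, List.range_succ, List.map_append, List.map_singleton,
    ballotStep_last]

variable (A B) in
lemma count_ballotWord :
    (ballotWord A B).count U = 1 + #B + (n - #A) ∧
      (ballotWord A B).count D = #A + (n - #B) + 1 := by
  obtain ⟨hU, hD⟩ := count_map_ballotStep_range A B n le_rfl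
  rw [prefixCount_of_le A le_rfl, prefixCount_of_le B le_rfl] at hU hD
  simp [ballotWord_eq_append, List.count_append, hU, hD]

lemma count_D_le_count_U_map_range (h : ∀ i, prefixCount A i ≤ prefixCount B i) {k : ℕ}
    (hk : k ≤ 2 * n + 1) :
    ((List.range k).map (ballotStep A B)).count D ≤
      ((List.range k).map (ballotStep A B)).count U := by
  obtain ⟨i, rfl | rfl⟩ := Nat.even_or_odd' k
  · rcases i with _ | i
    · simp
    obtain ⟨hU, hD⟩ := count_map_ballotStep_range A B i (by omega)
    have := h i
    rw [show 2 * (i + 1) = 2 * i + 1 + 1 by ring, List.range_succ, List.map_append,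
      List.count_append, List.count_append, hU, hD]
    rcases (ballotStep A B (2 * i + 1)).dichotomy with hs | hs <;> simp [hs] <;> omega
  · obtain ⟨hU, hD⟩ := count_map_ballotStep_range A B i (by omega)
    have := h i
    omega

lemma isBallotPair_iff :
    IsBallotPair A B ↔ (ballotWord A B).count U = (ballotWord A B).count D ∧
      ∀ m, ((ballotWord A B).take m).count D ≤ ((ballotWord A B).take m).count U := by
  obtain ⟨hU, hD⟩ := count_ballotWord A B
  have hA : #A ≤ n := by simpa using card_le_univ A
  have hB : #B ≤ n := by simpa using card_le_univ B
  constructor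
  · rintro ⟨hcard, hpre⟩
    refine ⟨by omega, fun m => ?_⟩
    rcases le_or_gt (2 * n + 2) m with hm | hm
    · rw [List.take_of_length_le (by simpa [ballotWord] using hm)]
      omega
    · rw [ballotWord, ← List.map_take, List.take_range, min_eq_left hm.le]
      exact count_D_le_count_U_map_range hpre (by omega)
  · rintro ⟨hcount, hprefix⟩
    have hcard : #A = #B := by omega
    refine ⟨hcard, fun i => ?_⟩
    rcases le_or_gt n i with hi | hi
    · rw [prefixCount_of_le A hi, prefixCount_of_le B hi, hcard]
    obtain ⟨hU, hD⟩ := count_map_ballotStep_range A B i hi.le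
    have := hprefix (2 * i + 1)
    rw [ballotWord, ← List.map_take, List.take_range, min_eq_left (by omega), hU, hD] at this
    have := prefixCount_le_self A i
    have := prefixCount_le_self B i
    omega

lemma count_U_ballotWord (h : IsBallotPair A B) : (ballotWord A B).count U = n + 1 := by
  have : #B ≤ n := by simpa using card_le_univ B
  rw [(count_ballotWord A B).1, h.1]
  omega

lemma getElem?_ballotWord {m : ℕ} (hm : m < 2 * n + 2) :
    (ballotWord A B)[m]? = some (ballotStep A B m) := by
  simp [ballotWord, List.getElem?_range hm]

variable (n) in
def pairOfDyckWord (p : DyckWord) : Finset (Fin n) × Finset (Fin n) :=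
  (univ.filter fun x : Fin n => p.toList[2 * x.val + 2]? = some D,
    univ.filter fun x : Fin n => p.toList[2 * x.val + 1]? = some U)

lemma pairOfDyckWord_ballotWord (h : IsBallotPair A B) :
    pairOfDyckWord n ⟨ballotWord A B, (isBallotPair_iff.1 h).1, (isBallotPair_iff.1 h).2⟩ =
      (A, B) := by
  refine Prod.ext (Finset.ext fun x => ?_) (Finset.ext fun x => ?_) <;>
  simp only [pairOfDyckWord, mem_filter, mem_univ, true_and]
  · rw [getElem?_ballotWord (by omega), ballotStep_two_mul_add_two]
    by_cases hx : x ∈ A <;> simp [hx]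
  · rw [getElem?_ballotWord (by omega), ballotStep_two_mul_add_one]
    by_cases hx : x ∈ B <;> simp [hx]

lemma ballotWord_pairOfDyckWord {p : DyckWord} (hp : p.semilength = n + 1) :
    ballotWord (pairOfDyckWord n p).1 (pairOfDyckWord n p).2 = p.toList := by
  have hlen : p.toList.length = 2 * n + 2 := by
    rw [← p.two_mul_semilength_eq_length, hp, mul_add_one]
  have hp0 : p ≠ 0 := by
    rintro rfl
    simp at hp
  refine List.ext_getElem? fun m => ?_
  rcases lt_or_ge m (2 * n + 2) with hm | hm
  swap
  · rw [List.getElem?_eq_none (by simpa [ballotWord] using hm), List.getElem?_eq_none (by omega)]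
  rw [getElem?_ballotWord hm]
  obtain ⟨s, hs⟩ : ∃ s, p.toList[m]? = some s := ⟨_, List.getElem?_eq_getElem (by omega)⟩
  obtain rfl | rfl | ⟨x, rfl | rfl⟩ :
      m = 0 ∨ m = 2 * n + 1 ∨ ∃ x : Fin n, m = 2 * x + 1 ∨ m = 2 * x + 2 := by
    obtain ⟨k, rfl | rfl⟩ := Nat.even_or_odd' m
    · rcases k with _ | k
      · exact Or.inl rfl
      · exact Or.inr (Or.inr ⟨⟨k, by omega⟩, Or.inr rfl⟩)
    · rcases (show k < n ∨ k = n by omega) with hk | rfl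
      · exact Or.inr (Or.inr ⟨⟨k, hk⟩, Or.inl rfl⟩)
      · exact Or.inr (Or.inl rfl)
  · exact (DyckWord.getElem?_zero hp0).symm
  · rw [ballotStep_last, ← DyckWord.getElem?_length_sub_one hp0, hlen]
    rfl
  · rw [ballotStep_two_mul_add_one, hs]
    cases s <;> simp [pairOfDyckWord, hs]
  · rw [ballotStep_two_mul_add_two, hs]
    cases s <;> simp [pairOfDyckWord, hs]

lemma isBallotPair_pairOfDyckWord {p : DyckWord} (hp : p.semilength = n + 1) :
    IsBallotPair (pairOfDyckWord n p).1 (pairOfDyckWord n p).2 :=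
  isBallotPair_iff.2 (by
    rw [ballotWord_pairOfDyckWord hp]
    exact ⟨p.count_U_eq_count_D, p.count_D_le_count_U⟩)

variable (n) in
def ballotPairEquivDyckWord : {q : Finset (Fin n) × Finset (Fin n) // IsBallotPair q.1 q.2} ≃
    {p : DyckWord // p.semilength = n + 1} where
  toFun q := ⟨⟨ballotWord q.1.1 q.1.2, (isBallotPair_iff.1 q.2).1, (isBallotPair_iff.1 q.2).2⟩,
    count_U_ballotWord q.2⟩
  invFun p := ⟨pairOfDyckWord n p.1, isBallotPair_pairOfDyckWord p.2⟩
  left_inv q := Subtype.ext (pairOfDyckWord_ballotWord q.2)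
  right_inv p := Subtype.ext (DyckWord.ext (ballotWord_pairOfDyckWord p.2))

end BallotWord

end RightPlanarRook

/-- The number of elements of the right planar rook monoid `RP_n` is the Catalan number
`C_{n+1} = (2n+2 choose n+1)/(n+2)`. -/
theorem card_right_planar_rook_monoid (n : ℕ) :
    Nat.card {f : PMap n // IsInj f ∧ IsOrd f ∧ IsRtop f} = catalan (n + 1) ∧
      catalan (n + 1) = (2 * n + 2).choose (n + 1) / (n + 2) := by
  constructor
  · rw [Nat.card_congr ((RightPlanarRook.rightPlanarEquivBallotPair n).trans
        (RightPlanarRook.ballotPairEquivDyckWord n)),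
      Nat.card_eq_fintype_card, DyckWord.card_dyckWord_semilength_eq_catalan]
  · rw [catalan_eq_centralBinom_div, Nat.centralBinom]
    rfl
end

section
/- In the Motzkin monoid M_n, the generators satisfy t_i r_{i+1} = t_i t_{i+1} l_i and l_{i+1} t_i = r_i t_{i+1} t_i for all 1 ≤ i ≤ n−2. -/
/-!
All generators involved agree with the identity diagram outside the window `{i, i+1, i+2}`,
and every middle-row path created by stacking them stays inside that window. So each product
is computed by a finite inspection of the window: `t_i r_{i+1}` and `t_i t_{i+1} l_i` both have
the top cap `(i, i+1)`, the strand from `i+2` on top to `i+1` below and no bottom cap, while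
`l_{i+1} t_i` and `r_i t_{i+1} t_i` both have the bottom cap `(i, i+1)`, the strand from `i+1`
to `i+2` and no top cap.
-/

/-- Vertices of a Motzkin diagram: `Sum.inl` is the top row, `Sum.inr` the bottom row. -/
abbrev MVert (n : ℕ) := Fin n ⊕ Fin n

/-- A Motzkin-type diagram on two rows of `n` vertices, given by its edge relation. -/
abbrev MDiag (n : ℕ) := MVert n → MVert n → Prop

/-- One step between middle-row vertices when stacking `d₁` on top of `d₂`. -/
def dstep {n : ℕ} (d₁ d₂ : MDiag n) (m m' : Fin n) : Prop :=
  d₁ (Sum.inr m) (Sum.inr m') ∨ d₂ (Sum.inl m) (Sum.inl m')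

/-- Reachability through the middle row when stacking `d₁` on top of `d₂`. -/
def dreach {n : ℕ} (d₁ d₂ : MDiag n) : Fin n → Fin n → Prop :=
  Relation.ReflTransGen (dstep d₁ d₂)

/-- Diagram multiplication: stack `d₁` on top of `d₂`, identify the bottom row of `d₁`
with the top row of `d₂`, keep the induced edges, and discard closed loops (x = 1). -/
def dcomp {n : ℕ} (d₁ d₂ : MDiag n) : MDiag n := fun x y =>
  match x, y with
  | Sum.inl u, Sum.inl u' =>
      d₁ (Sum.inl u) (Sum.inl u') ∨
        (u ≠ u' ∧ ∃ m m', d₁ (Sum.inl u) (Sum.inr m) ∧ dreach d₁ d₂ m m' ∧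
          d₁ (Sum.inl u') (Sum.inr m'))
  | Sum.inl u, Sum.inr v =>
      ∃ m m', d₁ (Sum.inl u) (Sum.inr m) ∧ dreach d₁ d₂ m m' ∧ d₂ (Sum.inl m') (Sum.inr v)
  | Sum.inr v, Sum.inl u =>
      ∃ m m', d₁ (Sum.inl u) (Sum.inr m) ∧ dreach d₁ d₂ m m' ∧ d₂ (Sum.inl m') (Sum.inr v)
  | Sum.inr v, Sum.inr v' =>
      d₂ (Sum.inr v) (Sum.inr v') ∨
        (v ≠ v' ∧ ∃ m m', d₂ (Sum.inl m) (Sum.inr v) ∧ dreach d₁ d₂ m m' ∧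
          d₂ (Sum.inl m') (Sum.inr v'))

/-- The identity diagram. -/
def iddiag (n : ℕ) : MDiag n := fun x y =>
  match x, y with
  | Sum.inl a, Sum.inr b => a = b
  | Sum.inr a, Sum.inl b => a = b
  | _, _ => False

/-- The Temperley-Lieb generator `t i` (0-indexed): horizontal edges joining vertices
`i, i+1` on top and on bottom, vertical edges elsewhere. -/
def tdiag (n i : ℕ) : MDiag n := fun x y =>
  match x, y with
  | Sum.inl a, Sum.inl b => ((a : ℕ) = i ∧ (b : ℕ) = i + 1) ∨ ((a : ℕ) = i + 1 ∧ (b : ℕ) = i)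
  | Sum.inr a, Sum.inr b => ((a : ℕ) = i ∧ (b : ℕ) = i + 1) ∨ ((a : ℕ) = i + 1 ∧ (b : ℕ) = i)
  | Sum.inl a, Sum.inr b => a = b ∧ (a : ℕ) ≠ i ∧ (a : ℕ) ≠ i + 1
  | Sum.inr a, Sum.inl b => a = b ∧ (a : ℕ) ≠ i ∧ (a : ℕ) ≠ i + 1

/-- The generator `r i` (0-indexed): an edge from top vertex `i+1` to bottom vertex `i`,
vertical edges elsewhere; top vertex `i` and bottom vertex `i+1` are empty. -/
def rdiag (n i : ℕ) : MDiag n := fun x y =>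
  match x, y with
  | Sum.inl a, Sum.inr b =>
      ((a : ℕ) = i + 1 ∧ (b : ℕ) = i) ∨ (a = b ∧ (a : ℕ) ≠ i ∧ (a : ℕ) ≠ i + 1)
  | Sum.inr b, Sum.inl a =>
      ((a : ℕ) = i + 1 ∧ (b : ℕ) = i) ∨ (a = b ∧ (a : ℕ) ≠ i ∧ (a : ℕ) ≠ i + 1)
  | _, _ => False

/-- The generator `l i` (0-indexed): an edge from top vertex `i` to bottom vertex `i+1`,
vertical edges elsewhere; top vertex `i+1` and bottom vertex `i` are empty. -/
def ldiag (n i : ℕ) : MDiag n := fun x y =>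
  match x, y with
  | Sum.inl a, Sum.inr b =>
      ((a : ℕ) = i ∧ (b : ℕ) = i + 1) ∨ (a = b ∧ (a : ℕ) ≠ i ∧ (a : ℕ) ≠ i + 1)
  | Sum.inr b, Sum.inl a =>
      ((a : ℕ) = i ∧ (b : ℕ) = i + 1) ∨ (a = b ∧ (a : ℕ) ≠ i ∧ (a : ℕ) ≠ i + 1)
  | _, _ => False

/-- The idempotent `p i = r i * l i` (0-indexed): the partial-identity diagram whose
vertex `i` on top and on bottom is empty, with vertical edges elsewhere. -/
def pdiag (n i : ℕ) : MDiag n := fun x y =>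
  match x, y with
  | Sum.inl a, Sum.inr b => a = b ∧ (a : ℕ) ≠ i
  | Sum.inr a, Sum.inl b => a = b ∧ (a : ℕ) ≠ i
  | _, _ => False

/-- The product of a list of diagrams, multiplied left-to-right. -/
def dprod (n : ℕ) (L : List (MDiag n)) : MDiag n := L.foldr dcomp (iddiag n)

theorem Relation.ReflTransGen.eq_or_mem_and_mem {α : Type*} {r : α → α → Prop} {s : Set α}
    (hr : ∀ a b, r a b → a ∈ s ∧ b ∈ s) {a b : α} (h : Relation.ReflTransGen r a b) :
    a = b ∨ a ∈ s ∧ b ∈ s := by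
  rcases Relation.reflTransGen_iff_eq_or_transGen.1 h with rfl | h
  · exact Or.inl rfl
  · obtain ⟨c, hac, -⟩ := Relation.TransGen.head'_iff.1 h
    obtain ⟨c', -, hcb⟩ := Relation.TransGen.tail'_iff.1 h
    exact Or.inr ⟨(hr a c hac).1, (hr c' b hcb).2⟩

namespace MDiag

variable {n : ℕ}

/-- `thru a b` is read with `a` in the top row and `b` in the bottom row. -/
def ofEdges (top bot thru : Fin n → Fin n → Prop) : MDiag n := fun x y =>
  match x, y with
  | .inl a, .inl b => top a b
  | .inr a, .inr b => bot a b
  | .inl a, .inr b => thru a b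
  | .inr b, .inl a => thru a b

def cap (i : ℕ) : Fin n → Fin n → Prop := fun a b =>
  (a : ℕ) = i ∧ (b : ℕ) = i + 1 ∨ (a : ℕ) = i + 1 ∧ (b : ℕ) = i

/-- The identity strands outside the window `{i, i+1, i+2}` together with one strand
from `p` on top to `q` on the bottom. -/
def strand (i p q : ℕ) : Fin n → Fin n → Prop := fun a b =>
  (a : ℕ) = p ∧ (b : ℕ) = q ∨ a = b ∧ (a : ℕ) ≠ i ∧ (a : ℕ) ≠ i + 1 ∧ (a : ℕ) ≠ i + 2

theorem dcomp_eq_ofEdges {d₁ d₂ : MDiag n} {top bot thru : Fin n → Fin n → Prop}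
    (htop : ∀ u u', d₁ (.inl u) (.inl u') ↔ top u u')
    (hbot : ∀ v v', d₂ (.inr v) (.inr v') ↔ bot v v')
    (hcap_top : ∀ u u' m m', d₁ (.inl u) (.inr m) → dreach d₁ d₂ m m' →
      d₁ (.inl u') (.inr m') → u = u')
    (hcap_bot : ∀ v v' m m', d₂ (.inl m) (.inr v) → dreach d₁ d₂ m m' →
      d₂ (.inl m') (.inr v') → v = v')
    (hthru_of_path : ∀ u v m m', d₁ (.inl u) (.inr m) → dreach d₁ d₂ m m' →
      d₂ (.inl m') (.inr v) → thru u v)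
    (hpath_of_thru : ∀ u v, thru u v → dcomp d₁ d₂ (.inl u) (.inr v)) :
    dcomp d₁ d₂ = ofEdges top bot thru := by
  have hthru_iff (u v) : dcomp d₁ d₂ (.inl u) (.inr v) ↔ thru u v :=
    ⟨fun ⟨m, m', h₁, h₂, h₃⟩ => hthru_of_path u v m m' h₁ h₂ h₃, hpath_of_thru u v⟩
  funext x y
  apply propext
  rcases x with u | v <;> rcases y with u' | v'
  · refine (or_iff_left ?_).trans (htop u u')
    exact fun ⟨hne, m, m', h₁, h₂, h₃⟩ => hne (hcap_top u u' m m' h₁ h₂ h₃)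
  · exact hthru_iff u v'
  · exact hthru_iff u' v
  · refine (or_iff_left ?_).trans (hbot v v')
    exact fun ⟨hne, m, m', h₁, h₂, h₃⟩ => hne (hcap_bot v v' m m' h₁ h₂ h₃)

end MDiag

theorem dreach_val_eq_or_mem_window {n a b : ℕ} {d₁ d₂ : MDiag n}
    (hs : ∀ m m', dstep d₁ d₂ m m' → (a ≤ m ∧ m ≤ b) ∧ (a ≤ m' ∧ m' ≤ b))
    ⦃m m' : Fin n⦄ (h : dreach d₁ d₂ m m') :
    (m : ℕ) = m' ∨ (a ≤ m ∧ m ≤ b) ∧ (a ≤ m' ∧ m' ≤ b) :=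
  (Relation.ReflTransGen.eq_or_mem_and_mem (s := {m : Fin n | a ≤ m ∧ m ≤ b}) hs h).imp_left
    (congrArg _)

open MDiag

section Window

variable {n i : ℕ}

theorem tdiag_dcomp_rdiag_succ :
    dcomp (tdiag n i) (rdiag n (i + 1)) =
      ofEdges (cap i) (fun _ _ => False) (strand i (i + 2) (i + 1)) := by
  have hreach := dreach_val_eq_or_mem_window (d₁ := tdiag n i) (d₂ := rdiag n (i + 1))
    (a := i) (b := i + 1) fun m m' h => by
      simp only [dstep, tdiag, rdiag, or_false] at h; omega
  refine dcomp_eq_ofEdges (fun _ _ => Iff.rfl) (fun _ _ => Iff.rfl) ?_ ?_ ?_ ?_ <;>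
    simp only [dcomp, tdiag, rdiag, strand, Fin.ext_iff]
  iterate 3 (intro _ _ m m' h₁ h₂ h₃; rcases hreach h₂ with h | h <;> omega)
  rintro u v (⟨hu, hv⟩ | ⟨huv, hu⟩)
  · exact ⟨u, u, ⟨rfl, by omega, by omega⟩, .refl, .inl ⟨by omega, by omega⟩⟩
  · exact ⟨u, u, ⟨rfl, by omega, by omega⟩, .refl, .inr ⟨by omega, by omega, by omega⟩⟩

theorem tdiag_dcomp_tdiag_succ (hn : i + 2 < n) :
    dcomp (tdiag n i) (tdiag n (i + 1)) =
      ofEdges (cap i) (cap (i + 1)) (strand i (i + 2) i) := by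
  have hreach := dreach_val_eq_or_mem_window (d₁ := tdiag n i) (d₂ := tdiag n (i + 1))
    (a := i) (b := i + 2) fun m m' h => by
      simp only [dstep, tdiag] at h; omega
  refine dcomp_eq_ofEdges (fun _ _ => Iff.rfl) (fun _ _ => Iff.rfl) ?_ ?_ ?_ ?_ <;>
    simp only [dcomp, tdiag, strand, Fin.ext_iff]
  iterate 3 (intro _ _ m m' h₁ h₂ h₃; rcases hreach h₂ with h | h <;> omega)
  rintro u v (⟨hu, hv⟩ | ⟨huv, hu⟩)
  · refine ⟨u, v, ⟨rfl, by omega, by omega⟩, ?_, ⟨rfl, by omega, by omega⟩⟩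
    exact .head (b := ⟨i + 1, by omega⟩) (.inr (.inr ⟨hu, rfl⟩))
      (.single (.inl (.inr ⟨rfl, hv⟩)))
  · exact ⟨u, u, ⟨rfl, by omega, by omega⟩, .refl, ⟨huv, by omega, by omega⟩⟩

theorem ofEdges_dcomp_ldiag (hn : i + 2 < n) :
    dcomp (ofEdges (cap i) (cap (i + 1)) (strand i (i + 2) i)) (ldiag n i) =
      ofEdges (cap i) (fun _ _ => False) (strand i (i + 2) (i + 1)) := by
  have hreach := dreach_val_eq_or_mem_window
    (d₁ := ofEdges (cap i) (cap (i + 1)) (strand i (i + 2) i)) (d₂ := ldiag n i)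
    (a := i + 1) (b := i + 2) fun m m' h => by
      simp only [dstep, ofEdges, cap, ldiag, or_false] at h; omega
  refine dcomp_eq_ofEdges (fun _ _ => Iff.rfl) (fun _ _ => Iff.rfl) ?_ ?_ ?_ ?_ <;>
    simp only [dcomp, ofEdges, ldiag, strand, Fin.ext_iff]
  iterate 3 (intro _ _ m m' h₁ h₂ h₃; rcases hreach h₂ with h | h <;> omega)
  rintro u v (⟨hu, hv⟩ | ⟨huv, hu⟩)
  · exact ⟨⟨i, by omega⟩, ⟨i, by omega⟩, .inl ⟨hu, rfl⟩, .refl, .inl ⟨rfl, hv⟩⟩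
  · exact ⟨u, u, .inr ⟨rfl, hu⟩, .refl, .inr ⟨huv, hu.1, hu.2.1⟩⟩

theorem ldiag_succ_dcomp_tdiag (hn : i + 2 < n) :
    dcomp (ldiag n (i + 1)) (tdiag n i) =
      ofEdges (fun _ _ => False) (cap i) (strand i (i + 1) (i + 2)) := by
  have hreach := dreach_val_eq_or_mem_window (d₁ := ldiag n (i + 1)) (d₂ := tdiag n i)
    (a := i) (b := i + 1) fun m m' h => by
      simp only [dstep, ldiag, tdiag, false_or] at h; omega
  refine dcomp_eq_ofEdges (fun _ _ => Iff.rfl) (fun _ _ => Iff.rfl) ?_ ?_ ?_ ?_ <;>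
    simp only [dcomp, ldiag, tdiag, strand, Fin.ext_iff]
  iterate 3 (intro _ _ m m' h₁ h₂ h₃; rcases hreach h₂ with h | h <;> omega)
  rintro u v (⟨hu, hv⟩ | ⟨huv, hu⟩)
  · exact ⟨⟨i + 2, hn⟩, ⟨i + 2, hn⟩, .inl ⟨hu, rfl⟩, .refl, ⟨hv.symm, by simp, by simp⟩⟩
  · exact ⟨u, u, .inr ⟨rfl, by omega, by omega⟩, .refl, ⟨by omega, by omega, by omega⟩⟩

theorem rdiag_dcomp_tdiag_succ (hn : i + 2 < n) :
    dcomp (rdiag n i) (tdiag n (i + 1)) =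
      ofEdges (fun _ _ => False) (cap (i + 1)) (strand i (i + 1) i) := by
  have hreach := dreach_val_eq_or_mem_window (d₁ := rdiag n i) (d₂ := tdiag n (i + 1))
    (a := i + 1) (b := i + 2) fun m m' h => by
      simp only [dstep, rdiag, tdiag, false_or] at h; omega
  refine dcomp_eq_ofEdges (fun _ _ => Iff.rfl) (fun _ _ => Iff.rfl) ?_ ?_ ?_ ?_ <;>
    simp only [dcomp, rdiag, tdiag, strand, Fin.ext_iff]
  iterate 3 (intro _ _ m m' h₁ h₂ h₃; rcases hreach h₂ with h | h <;> omega)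
  rintro u v (⟨hu, hv⟩ | ⟨huv, hu⟩)
  · exact ⟨⟨i, by omega⟩, ⟨i, by omega⟩, .inl ⟨hu, rfl⟩, .refl,
      ⟨hv.symm, by simp, by simp +arith⟩⟩
  · exact ⟨u, u, .inr ⟨rfl, by omega, by omega⟩, .refl, ⟨by omega, by omega, by omega⟩⟩

theorem ofEdges_dcomp_tdiag (hn : i + 2 < n) :
    dcomp (ofEdges (fun _ _ => False) (cap (i + 1)) (strand i (i + 1) i)) (tdiag n i) =
      ofEdges (fun _ _ => False) (cap i) (strand i (i + 1) (i + 2)) := by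
  have hreach := dreach_val_eq_or_mem_window
    (d₁ := ofEdges (fun _ _ => False) (cap (i + 1)) (strand i (i + 1) i)) (d₂ := tdiag n i)
    (a := i) (b := i + 2) fun m m' h => by
      simp only [dstep, ofEdges, cap, tdiag] at h; omega
  refine dcomp_eq_ofEdges (fun _ _ => Iff.rfl) (fun _ _ => Iff.rfl) ?_ ?_ ?_ ?_ <;>
    simp only [dcomp, ofEdges, tdiag, strand, Fin.ext_iff]
  iterate 3 (intro _ _ m m' h₁ h₂ h₃; rcases hreach h₂ with h | h <;> omega)
  rintro u v (⟨hu, hv⟩ | ⟨huv, hu⟩)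
  · refine ⟨⟨i, by omega⟩, ⟨i + 2, hn⟩, .inl ⟨hu, rfl⟩, ?_, ⟨hv.symm, by simp, by simp⟩⟩
    exact .head (b := ⟨i + 1, by omega⟩) (.inr (.inl ⟨rfl, rfl⟩))
      (.single (.inl (.inl ⟨rfl, rfl⟩)))
  · exact ⟨u, u, .inr ⟨rfl, hu⟩, .refl, ⟨by omega, by omega, by omega⟩⟩

end Window

/-- In the Motzkin monoid `M_n`, `t_i r_{i+1} = t_i t_{i+1} l_i` and
`l_{i+1} t_i = r_i t_{i+1} t_i` (0-indexed). -/
theorem motzkin_tr_relations (n : ℕ) :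
    ∀ i : ℕ, i + 2 < n →
      dcomp (tdiag n i) (rdiag n (i + 1)) =
        dcomp (dcomp (tdiag n i) (tdiag n (i + 1))) (ldiag n i) ∧
      dcomp (ldiag n (i + 1)) (tdiag n i) =
        dcomp (dcomp (rdiag n i) (tdiag n (i + 1))) (tdiag n i) := by
  intro i hi
  refine ⟨?_, ?_⟩
  · rw [tdiag_dcomp_rdiag_succ, tdiag_dcomp_tdiag_succ hi, ofEdges_dcomp_ldiag hi]
  · rw [ldiag_succ_dcomp_tdiag hi, rdiag_dcomp_tdiag_succ hi, ofEdges_dcomp_tdiag hi]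
end

section
/- (Hop lemma) In the Motzkin monoid M_n, for natural numbers i < k with k − i even: (t_{k−1} t_{k−3} ··· t_{i+1}) p_i = (t_{k−1} t_{k−3} ··· t_{i+1})(t_{k−2} t_{k−4} ··· t_i)(l_{k−1} l_{k−2} ··· l_i). -/
theorem Relation.reflTransGen_iff_eq_or_of_functional {α : Type*} {r : α → α → Prop}
    (hsymm : ∀ a b, r a b → r b a) (hfun : ∀ a b c, r a b → r a c → b = c) {a b : α} :
    Relation.ReflTransGen r a b ↔ a = b ∨ r a b := by
  refine ⟨fun h => ?_, ?_⟩
  · induction h using Relation.ReflTransGen.head_induction_on with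
    | refl => exact Or.inl rfl
    | head hac _ ih =>
      rcases ih with rfl | hcb
      · exact Or.inr hac
      · exact Or.inl (hfun _ _ _ (hsymm _ _ hac) hcb)
  · rintro (rfl | h)
    · exact .refl
    · exact .single h

theorem Relation.reflTransGen_iff_of_succ_chain {α : Type*} [LinearOrder α] [SuccOrder α]
    [IsSuccArchimedean α] {r : α → α → Prop} {lo hi : α} (hsymm : ∀ a b, r a b → r b a)
    (hsucc : ∀ x ∈ Set.Ico lo hi, r x (Order.succ x))
    (hmem : ∀ a b, r a b → a ∈ Set.Icc lo hi ∧ b ∈ Set.Icc lo hi) {a b : α} :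
    Relation.ReflTransGen r a b ↔ a = b ∨ a ∈ Set.Icc lo hi ∧ b ∈ Set.Icc lo hi := by
  refine ⟨fun h => ?_, ?_⟩
  · induction h using Relation.ReflTransGen.head_induction_on with
    | refl => exact Or.inl rfl
    | head hac _ ih =>
      exact Or.inr ⟨(hmem _ _ hac).1, ih.elim (fun h => h ▸ (hmem _ _ hac).2) And.right⟩
  · rintro (rfl | ⟨ha, hb⟩)
    · exact .refl
    · exact reflTransGen_of_succ r (fun x hx => hsucc x ⟨ha.1.trans hx.1, hx.2.trans_le hb.2⟩)
        (fun x hx => hsymm _ _ (hsucc x ⟨hb.1.trans hx.1, hx.2.trans_le ha.2⟩))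

theorem Fin.val_orderSucc_of_lt {n : ℕ} {x y : Fin n} (h : x < y) :
    ((Order.succ x : Fin n) : ℕ) = x + 1 := by
  have hx : (x : ℕ) + 1 < n := by omega
  rw [Order.succ_eq_of_covBy (b := ⟨x + 1, hx⟩) (Fin.covBy_iff.2 (by simp))]

/-- `cupPair c m` pairs `c + 2 * j` with `c + 2 * j + 1` for every `j < m`. -/
def cupPair (c m a b : ℕ) : Prop :=
  (c ≤ a ∧ a < c + 2 * m ∧ a % 2 = c % 2 ∧ b = a + 1) ∨
    (c ≤ b ∧ b < c + 2 * m ∧ b % 2 = c % 2 ∧ a = b + 1)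

theorem cupPair_symm {c m a b : ℕ} (h : cupPair c m a b) : cupPair c m b a := by
  unfold cupPair at *; omega

theorem cupPair_right_unique {c m a b b' : ℕ} (h : cupPair c m a b) (h' : cupPair c m a b') :
    b = b' := by
  unfold cupPair at *; omega

def cupsDiag (n c m : ℕ) : MDiag n
  | .inl a, .inl b | .inr a, .inr b => cupPair c m a b
  | .inl a, .inr b | .inr b, .inl a => a = b ∧ ((a : ℕ) < c ∨ c + 2 * m ≤ a)

def shiftDiag (n c M : ℕ) : MDiag n
  | .inl a, .inr b | .inr b, .inl a =>
      (c ≤ a ∧ (a : ℕ) < c + M ∧ (b : ℕ) = a + 1) ∨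
        (a = b ∧ ((a : ℕ) < c ∨ c + M < a))
  | _, _ => False

def hopDiag (n i m : ℕ) : MDiag n
  | .inl a, .inl b => cupPair (i + 1) m a b
  | .inr a, .inr b => cupPair i m a b
  | .inl a, .inr b | .inr b, .inl a =>
      ((a : ℕ) = i ∧ (b : ℕ) = i + 2 * m) ∨ (a = b ∧ ((a : ℕ) < i ∨ i + 2 * m < a))

def puncturedCupsDiag (n i m : ℕ) : MDiag n
  | .inl a, .inl b | .inr a, .inr b => cupPair (i + 1) m a b
  | .inl a, .inr b | .inr b, .inl a => a = b ∧ ((a : ℕ) < i ∨ i + 2 * m < a)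

section
variable {n : ℕ}

theorem dcomp_eq_of_forall_iff {d₁ d₂ d : MDiag n}
    (hsymm : ∀ a b, d (.inr b) (.inl a) ↔ d (.inl a) (.inr b))
    (htt : ∀ a b, dcomp d₁ d₂ (.inl a) (.inl b) ↔ d (.inl a) (.inl b))
    (htb : ∀ a b, dcomp d₁ d₂ (.inl a) (.inr b) ↔ d (.inl a) (.inr b))
    (hbb : ∀ a b, dcomp d₁ d₂ (.inr a) (.inr b) ↔ d (.inr a) (.inr b)) :
    dcomp d₁ d₂ = d := by
  funext x y
  rcases x with a | a <;> rcases y with b | b <;> apply propext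
  exacts [htt a b, htb a b, (htb b a).trans (hsymm b a).symm, hbb a b]

theorem dreach_iff_of_dstep_iff_cupPair {d₁ d₂ : MDiag n} {c m : ℕ}
    (h : ∀ a b, dstep d₁ d₂ a b ↔ cupPair c m a b) {a b : Fin n} :
    dreach d₁ d₂ a b ↔ a = b ∨ cupPair c m a b := by
  rw [dreach, Relation.reflTransGen_iff_eq_or_of_functional, h]
  · exact fun a b hab => (h b a).2 (cupPair_symm ((h a b).1 hab))
  · exact fun a b b' hb hb' => Fin.ext (cupPair_right_unique ((h a b).1 hb) ((h a b').1 hb'))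

theorem cupsDiag_zero (c : ℕ) : cupsDiag n c 0 = iddiag n := by
  funext x y
  rcases x with a | a <;> rcases y with b | b <;> simp [cupsDiag, iddiag, cupPair] <;> omega

theorem dcomp_tdiag_cupsDiag (c m : ℕ) :
    dcomp (tdiag n (c + 2 * m)) (cupsDiag n c m) = cupsDiag n c (m + 1) := by
  have hreach : ∀ a b, dreach (tdiag n (c + 2 * m)) (cupsDiag n c m) a b ↔
      a = b ∨ cupPair c (m + 1) a b :=
    fun a b => dreach_iff_of_dstep_iff_cupPair fun a b => by
      simp only [dstep, tdiag, cupsDiag, cupPair]; omega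
  apply dcomp_eq_of_forall_iff <;> intro a b
  · simp only [cupsDiag]
  all_goals
    simp only [dcomp, tdiag, cupsDiag, hreach, ↓existsAndEq, ne_eq, true_and]
    grind [cupPair]

theorem dcomp_ldiag_iddiag (c : ℕ) : dcomp (ldiag n c) (iddiag n) = shiftDiag n c 1 := by
  have hreach : ∀ a b, dreach (ldiag n c) (iddiag n) a b ↔ b = a :=
    fun a b => Relation.reflTransGen_iff_eq fun b => by simp [dstep, ldiag, iddiag]
  apply dcomp_eq_of_forall_iff <;> intro a b
  · simp only [shiftDiag]
  all_goals
    simp only [dcomp, ldiag, iddiag, shiftDiag, hreach, ↓existsAndEq, ne_eq, true_and]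
    grind

theorem dcomp_ldiag_shiftDiag (c M : ℕ) :
    dcomp (ldiag n (c + M)) (shiftDiag n c M) = shiftDiag n c (M + 1) := by
  have hreach : ∀ a b, dreach (ldiag n (c + M)) (shiftDiag n c M) a b ↔ b = a :=
    fun a b => Relation.reflTransGen_iff_eq fun b => by simp [dstep, ldiag, shiftDiag]
  apply dcomp_eq_of_forall_iff <;> intro a b
  · simp only [shiftDiag]
  all_goals
    simp only [dcomp, ldiag, shiftDiag, hreach, ↓existsAndEq, ne_eq, true_and]
    grind

theorem dprod_map_range_succ (f : ℕ → MDiag n) (m : ℕ) :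
    dprod n ((List.range (m + 1)).map f) =
      dcomp (f 0) (dprod n ((List.range m).map fun j => f (j + 1))) := by
  rw [List.range_succ_eq_map, List.map_cons, List.map_map]
  rfl

theorem dprod_tdiag_eq_cupsDiag (c m : ℕ) {e : ℕ} (he : e + 2 = c + 2 * m) :
    dprod n ((List.range m).map fun j => tdiag n (e - 2 * j)) = cupsDiag n c m := by
  induction m generalizing e with
  | zero => exact (cupsDiag_zero c).symm
  | succ m ih =>
    have hrest : dprod n ((List.range m).map fun j => tdiag n (e - 2 * (j + 1))) =
        cupsDiag n c m := by
      rcases Nat.eq_zero_or_pos m with rfl | hm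
      · exact (cupsDiag_zero c).symm
      · rw [← ih (e := e - 2) (by omega)]
        congr 1
        refine List.map_congr_left fun j _ => ?_
        rw [show e - 2 * (j + 1) = e - 2 - 2 * j by omega]
    rw [dprod_map_range_succ, hrest, show e - 2 * 0 = c + 2 * m by omega, dcomp_tdiag_cupsDiag]

theorem dprod_ldiag_eq_shiftDiag (c : ℕ) {M e : ℕ} (hM : 0 < M) (he : e + 1 = c + M) :
    dprod n ((List.range M).map fun j => ldiag n (e - j)) = shiftDiag n c M := by
  induction M generalizing e with
  | zero => omega
  | succ M ih =>
    rw [dprod_map_range_succ, Nat.sub_zero]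
    rcases Nat.eq_zero_or_pos M with rfl | hM
    · rw [show e = c by omega]
      exact dcomp_ldiag_iddiag c
    · have hrest : dprod n ((List.range M).map fun j => ldiag n (e - (j + 1))) =
          shiftDiag n c M := by
        rw [← ih hM (e := e - 1) (by omega)]
        congr 1
        refine List.map_congr_left fun j _ => ?_
        rw [show e - (j + 1) = e - 1 - j by omega]
      rw [hrest, show e = c + M by omega, dcomp_ldiag_shiftDiag]

theorem dreach_cupsDiag_succ_cupsDiag {i m : ℕ} (hn : i + 2 * m < n) {a b : Fin n} :
    dreach (cupsDiag n (i + 1) m) (cupsDiag n i m) a b ↔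
      a = b ∨ i ≤ a ∧ (a : ℕ) ≤ i + 2 * m ∧ i ≤ b ∧ (b : ℕ) ≤ i + 2 * m := by
  have hstep : ∀ a b, dstep (cupsDiag n (i + 1) m) (cupsDiag n i m) a b ↔
      cupPair (i + 1) m a b ∨ cupPair i m a b := fun a b => Iff.rfl
  rw [dreach, Relation.reflTransGen_iff_of_succ_chain (lo := ⟨i, by omega⟩)
    (hi := ⟨i + 2 * m, hn⟩)]
  · simp only [Set.mem_Icc, Fin.le_def, and_assoc]
  · intro a b; simp only [hstep, cupPair]; omega
  · intro x hx
    rw [hstep, Fin.val_orderSucc_of_lt hx.2]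
    simp only [Set.mem_Ico, Fin.le_def, Fin.lt_def, cupPair, and_true] at hx ⊢; omega
  · intro a b; simp only [hstep, Set.mem_Icc, Fin.le_def, cupPair]; omega

theorem dcomp_cupsDiag_succ_cupsDiag {i m : ℕ} (hn : i + 2 * m < n) :
    dcomp (cupsDiag n (i + 1) m) (cupsDiag n i m) = hopDiag n i m := by
  apply dcomp_eq_of_forall_iff <;> intro a b
  · simp only [hopDiag]
  all_goals
    simp only [dcomp, cupsDiag, hopDiag, dreach_cupsDiag_succ_cupsDiag hn, ↓existsAndEq,
      ne_eq, true_and]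
    grind [cupPair]

theorem dcomp_cupsDiag_pdiag (i m : ℕ) :
    dcomp (cupsDiag n (i + 1) m) (pdiag n i) = puncturedCupsDiag n i m := by
  have hreach : ∀ a b, dreach (cupsDiag n (i + 1) m) (pdiag n i) a b ↔
      a = b ∨ cupPair (i + 1) m a b :=
    fun a b => dreach_iff_of_dstep_iff_cupPair fun a b => by
      simp only [dstep, pdiag, cupsDiag, or_false]
  apply dcomp_eq_of_forall_iff <;> intro a b
  · simp only [puncturedCupsDiag]
  all_goals
    simp only [dcomp, cupsDiag, pdiag, puncturedCupsDiag, hreach, ↓existsAndEq, ne_eq, true_and]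
    grind [cupPair]

theorem dcomp_hopDiag_shiftDiag (i m : ℕ) :
    dcomp (hopDiag n i m) (shiftDiag n i (2 * m)) = puncturedCupsDiag n i m := by
  have hreach : ∀ a b, dreach (hopDiag n i m) (shiftDiag n i (2 * m)) a b ↔
      a = b ∨ cupPair i m a b :=
    fun a b => dreach_iff_of_dstep_iff_cupPair fun a b => by
      simp only [dstep, hopDiag, shiftDiag, or_false]
  apply dcomp_eq_of_forall_iff <;> intro a b
  · simp only [puncturedCupsDiag]
  · simp only [dcomp, hopDiag, puncturedCupsDiag, hreach]
    grind [cupPair]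
  · simp only [dcomp, hopDiag, shiftDiag, puncturedCupsDiag, hreach]
    grind [cupPair]
  · simp only [dcomp, shiftDiag, puncturedCupsDiag, hreach]
    refine ⟨by grind [cupPair], fun h => Or.inr ?_⟩
    have ha : (a : ℕ) - 1 < n := by omega
    have hb : (b : ℕ) - 1 < n := by omega
    refine ⟨?_, ⟨a - 1, ha⟩, ⟨b - 1, hb⟩, ?_, ?_, ?_⟩ <;>
      simp only [cupPair, Fin.ext_iff] at h ⊢ <;> omega

end

/-- (Hop lemma) In the Motzkin monoid `M_n`, for `i < k` with `k - i` even: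
`(t_{k-1} t_{k-3} ⋯ t_{i+1}) p_i
  = (t_{k-1} t_{k-3} ⋯ t_{i+1})(t_{k-2} t_{k-4} ⋯ t_i)(l_{k-1} l_{k-2} ⋯ l_i)`. -/
theorem motzkin_hop (n i k : ℕ) (hik : i < k) (heven : Even (k - i)) (hk : k < n) :
    dcomp (dprod n ((List.range ((k - i) / 2)).map (fun j => tdiag n (k - 1 - 2 * j))))
        (pdiag n i) =
      dcomp
        (dcomp (dprod n ((List.range ((k - i) / 2)).map (fun j => tdiag n (k - 1 - 2 * j))))
          (dprod n ((List.range ((k - i) / 2)).map (fun j => tdiag n (k - 2 - 2 * j)))))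
        (dprod n ((List.range (k - i)).map (fun j => ldiag n (k - 1 - j)))) := by
  obtain ⟨m, hm⟩ := heven
  rw [show (k - i) / 2 = m by omega, dprod_tdiag_eq_cupsDiag (i + 1) m (e := k - 1) (by omega),
    dprod_tdiag_eq_cupsDiag i m (e := k - 2) (by omega),
    dprod_ldiag_eq_shiftDiag i (e := k - 1) (by omega) (by omega), show k - i = 2 * m by omega,
    dcomp_cupsDiag_pdiag, dcomp_cupsDiag_succ_cupsDiag (by omega), dcomp_hopDiag_shiftDiag]
end

section
/- (Burrow lemma) In the Motzkin monoid M_n, t_{i−1} p_i = t_{i−1} t_i l_{i−1} l_i for all 2 ≤ i ≤ n−1. -/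
/-!
Both sides are evaluated explicitly, factor by factor. A product `d₁ d₂` is determined once
one knows which vertices of the middle row are joined by arcs of `d₁` and `d₂`; in each of
the four products that occur the connected middle vertices form a single block of at most
three consecutive vertices, all other middle vertices being isolated. The only nontrivial
path is in `t_k t_{k+1}`, where the top vertex `k+2` runs through the middle row
`k+2 → k+1 → k` down to the bottom vertex `k`. After the further factors `l_k` and `l_{k+1}`
this strand becomes vertical again, and both sides equal the diagram with a top arc
`{k, k+1}`, empty bottom vertices `k, k+1`, and vertical strands elsewhere.
-/

section Burrow

variable {n : ℕ}

theorem dreach_refl {d₁ d₂ : MDiag n} (m : Fin n) : dreach d₁ d₂ m m := .refl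

theorem eq_or_of_dreach {d₁ d₂ : MDiag n} (P : Fin n → Prop)
    (h : ∀ m m', dstep d₁ d₂ m m' → P m ∧ P m') {m m' : Fin n} (hr : dreach d₁ d₂ m m') :
    m = m' ∨ P m ∧ P m' := by
  induction hr with
  | refl => exact .inl rfl
  | tail _ s ih => exact .inr ⟨ih.elim (· ▸ (h _ _ s).1) And.left, (h _ _ s).2⟩

theorem eq_of_dreach {d₁ d₂ : MDiag n} (h : ∀ m m', ¬dstep d₁ d₂ m m') {m m' : Fin n}
    (hr : dreach d₁ d₂ m m') : m = m' :=
  (eq_or_of_dreach (fun _ => False) (fun m m' s => (h m m' s).elim) hr).resolve_right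
    And.left

/- The products `t_k p_{k+1}`, `t_k t_{k+1}` and `t_k t_{k+1} l_k` (0-indexed), written out. -/

def tpdiag (n k : ℕ) : MDiag n := fun x y =>
  match x, y with
  | Sum.inl a, Sum.inl b => ((a : ℕ) = k ∧ (b : ℕ) = k + 1) ∨ ((a : ℕ) = k + 1 ∧ (b : ℕ) = k)
  | Sum.inl a, Sum.inr b => a = b ∧ (a : ℕ) ≠ k ∧ (a : ℕ) ≠ k + 1
  | Sum.inr b, Sum.inl a => a = b ∧ (a : ℕ) ≠ k ∧ (a : ℕ) ≠ k + 1
  | Sum.inr _, Sum.inr _ => False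

def ttdiag (n k : ℕ) : MDiag n := fun x y =>
  match x, y with
  | Sum.inl a, Sum.inl b => ((a : ℕ) = k ∧ (b : ℕ) = k + 1) ∨ ((a : ℕ) = k + 1 ∧ (b : ℕ) = k)
  | Sum.inl a, Sum.inr b =>
      ((a : ℕ) = k + 2 ∧ (b : ℕ) = k) ∨ (a = b ∧ (a : ℕ) ≠ k ∧ (a : ℕ) ≠ k + 1 ∧ (a : ℕ) ≠ k + 2)
  | Sum.inr b, Sum.inl a =>
      ((a : ℕ) = k + 2 ∧ (b : ℕ) = k) ∨ (a = b ∧ (a : ℕ) ≠ k ∧ (a : ℕ) ≠ k + 1 ∧ (a : ℕ) ≠ k + 2)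
  | Sum.inr a, Sum.inr b =>
      ((a : ℕ) = k + 1 ∧ (b : ℕ) = k + 2) ∨ ((a : ℕ) = k + 2 ∧ (b : ℕ) = k + 1)

def ttldiag (n k : ℕ) : MDiag n := fun x y =>
  match x, y with
  | Sum.inl a, Sum.inl b => ((a : ℕ) = k ∧ (b : ℕ) = k + 1) ∨ ((a : ℕ) = k + 1 ∧ (b : ℕ) = k)
  | Sum.inl a, Sum.inr b =>
      ((a : ℕ) = k + 2 ∧ (b : ℕ) = k + 1) ∨
        (a = b ∧ (a : ℕ) ≠ k ∧ (a : ℕ) ≠ k + 1 ∧ (a : ℕ) ≠ k + 2)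
  | Sum.inr b, Sum.inl a =>
      ((a : ℕ) = k + 2 ∧ (b : ℕ) = k + 1) ∨
        (a = b ∧ (a : ℕ) ≠ k ∧ (a : ℕ) ≠ k + 1 ∧ (a : ℕ) ≠ k + 2)
  | Sum.inr _, Sum.inr _ => False

theorem dcomp_tdiag_pdiag (k : ℕ) : dcomp (tdiag n k) (pdiag n (k + 1)) = tpdiag n k := by
  have hr : ∀ m m', dreach (tdiag n k) (pdiag n (k + 1)) m m' →
      m = m' ∨ ((m : ℕ) = k ∨ (m : ℕ) = k + 1) ∧ ((m' : ℕ) = k ∨ (m' : ℕ) = k + 1) :=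
    fun _ _ => eq_or_of_dreach (fun m => (m : ℕ) = k ∨ (m : ℕ) = k + 1)
      (by rintro m m' (h | h) <;> simp only [tdiag, pdiag] at h ⊢; omega)
  funext x y
  rcases x with a | a <;> rcases y with b | b <;> apply propext <;>
    simp only [dcomp, tdiag, pdiag, tpdiag, ne_eq, Fin.exists_iff, exists_and_left] <;>
    grind [dreach_refl]

theorem dcomp_tdiag_tdiag (k : ℕ) : dcomp (tdiag n k) (tdiag n (k + 1)) = ttdiag n k := by
  have hr : ∀ m m', dreach (tdiag n k) (tdiag n (k + 1)) m m' →
      m = m' ∨ ((m : ℕ) = k ∨ (m : ℕ) = k + 1 ∨ (m : ℕ) = k + 2) ∧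
        ((m' : ℕ) = k ∨ (m' : ℕ) = k + 1 ∨ (m' : ℕ) = k + 2) :=
    fun _ _ => eq_or_of_dreach (fun m => (m : ℕ) = k ∨ (m : ℕ) = k + 1 ∨ (m : ℕ) = k + 2)
      (by rintro m m' (h | h) <;> simp only [tdiag] at h ⊢ <;> omega)
  have hpath : ∀ m m' : Fin n, (m : ℕ) = k + 2 → (m' : ℕ) = k →
      dreach (tdiag n k) (tdiag n (k + 1)) m m' := fun m m' hm hm' =>
    .head (b := ⟨k + 1, by omega⟩) (.inr (.inr ⟨hm, rfl⟩)) (.single (.inl (.inr ⟨rfl, hm'⟩)))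
  funext x y
  rcases x with a | a <;> rcases y with b | b <;> apply propext <;>
    simp only [dcomp, tdiag, ttdiag, ne_eq, Fin.exists_iff, exists_and_left] <;>
    grind [dreach_refl]

theorem dcomp_ttdiag_ldiag (k : ℕ) : dcomp (ttdiag n k) (ldiag n k) = ttldiag n k := by
  have hr : ∀ m m', dreach (ttdiag n k) (ldiag n k) m m' →
      m = m' ∨ ((m : ℕ) = k + 1 ∨ (m : ℕ) = k + 2) ∧ ((m' : ℕ) = k + 1 ∨ (m' : ℕ) = k + 2) :=
    fun _ _ => eq_or_of_dreach (fun m => (m : ℕ) = k + 1 ∨ (m : ℕ) = k + 2)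
      (by rintro m m' (h | h) <;> simp only [ttdiag, ldiag] at h ⊢; omega)
  funext x y
  rcases x with a | a <;> rcases y with b | b <;> apply propext <;>
    simp only [dcomp, ttdiag, ldiag, ttldiag, ne_eq, Fin.exists_iff, or_and_right, and_or_left,
      exists_or, exists_and_left, exists_and_right, existsAndEq, true_and, and_true,
      exists_idem] <;>
    grind [dreach_refl]

theorem dcomp_ttldiag_ldiag (k : ℕ) : dcomp (ttldiag n k) (ldiag n (k + 1)) = tpdiag n k := by
  have hr : ∀ m m', dreach (ttldiag n k) (ldiag n (k + 1)) m m' → m = m' :=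
    fun _ _ => eq_of_dreach (by rintro m m' (h | h) <;> simp only [ttldiag, ldiag] at h)
  funext x y
  rcases x with a | a <;> rcases y with b | b <;> apply propext <;>
    simp only [dcomp, ttldiag, ldiag, tpdiag, ne_eq, Fin.exists_iff, or_and_right, and_or_left,
      exists_or, exists_and_left, exists_and_right, existsAndEq, true_and, and_true,
      exists_idem] <;>
    grind [dreach_refl]

end Burrow

/-- (Burrow lemma) In the Motzkin monoid `M_n`,
`t_{i-1} p_i = t_{i-1} t_i l_{i-1} l_i` for all valid `i` (0-indexed). -/
theorem motzkin_burrow (n : ℕ) :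
    ∀ i : ℕ, 1 ≤ i → i + 1 < n →
      dcomp (tdiag n (i - 1)) (pdiag n i) =
        dcomp (dcomp (dcomp (tdiag n (i - 1)) (tdiag n i)) (ldiag n (i - 1))) (ldiag n i) := by
  rintro i hi -
  obtain ⟨k, rfl⟩ : ∃ k, i = k + 1 := ⟨i - 1, by omega⟩
  rw [Nat.add_sub_cancel, dcomp_tdiag_pdiag, dcomp_tdiag_tdiag, dcomp_ttdiag_ldiag,
    dcomp_ttldiag_ldiag]
end

section
/- (Slide lemma) In the Motzkin monoid M_n, if T is any product of generators from {t_{i+1}, t_{i+2}, ..., t_{k−1}}, then (l_{k−1} l_{k−2} ··· l_i) T = T' (l_{k−1} l_{k−2} ··· l_i) for some product T' of generators from {t_i, t_{i+1}, ..., t_{k−2}}; in fact each t_j in T can be replaced by t_{j−1}. -/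
open Sum Relation

structure IsMatching {α : Type*} (r : α → α → Prop) : Prop where
  symm : ∀ {x y}, r x y → r y x
  irrefl : ∀ x, ¬ r x x
  unique : ∀ {x y z}, r x y → r x z → y = z

section Matching

variable {α β : Type*} {r : α → α → Prop}

lemma IsMatching.comap (h : IsMatching r) {f : β → α} (hf : Function.Injective f) :
    IsMatching (fun a b => r (f a) (f b)) :=
  ⟨h.symm, fun _ => h.irrefl _, fun hy hz => hf (h.unique hy hz)⟩

lemma IsMatching.reflTransGen_iff (h : IsMatching r) {a b : α} :
    ReflTransGen r a b ↔ a = b ∨ r a b := by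
  refine ⟨fun hab => ?_, by rintro (rfl | hab) <;> [exact .refl; exact .single hab]⟩
  induction hab with
  | refl => exact .inl rfl
  | tail _ hbc ih =>
    rcases ih with rfl | hab
    · exact .inr hbc
    · exact .inl (h.unique (h.symm hab) hbc)

/-- The connected component of `p` once the edge `p — q` is added to the matching `r`. -/
def pairComponent (r : α → α → Prop) (p q : α) : Set α := {x | x = p ∨ x = q ∨ r x p ∨ r x q}

lemma IsMatching.reflTransGen_pair_or_iff (h : IsMatching r) {p q a b : α} :
    ReflTransGen (fun x y => (x = p ∧ y = q ∨ x = q ∧ y = p) ∨ r x y) a b ↔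
      a = b ∨ r a b ∨ (a ∈ pairComponent r p q ∧ b ∈ pairComponent r p q) := by
  set s : α → α → Prop := fun x y => (x = p ∧ y = q ∨ x = q ∧ y = p) ∨ r x y
  have to_p : ∀ {x}, x ∈ pairComponent r p q → ReflTransGen s x p := by
    rintro x (rfl | rfl | hx | hx)
    · exact .refl
    · exact .single (.inl (.inr ⟨rfl, rfl⟩))
    · exact .single (.inr hx)
    · exact .head (.inr hx) (.single (.inl (.inr ⟨rfl, rfl⟩)))
  have of_p : ∀ {x}, x ∈ pairComponent r p q → ReflTransGen s p x := by
    rintro x (rfl | rfl | hx | hx)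
    · exact .refl
    · exact .single (.inl (.inl ⟨rfl, rfl⟩))
    · exact .single (.inr (h.symm hx))
    · exact .tail (.single (.inl (.inl ⟨rfl, rfl⟩))) (.inr (h.symm hx))
  constructor
  · intro hab
    induction hab with
    | refl => exact .inl rfl
    | @tail b c _ hbc ih =>
      rcases hbc with (⟨rfl, rfl⟩ | ⟨rfl, rfl⟩) | hbc
      · refine .inr (.inr ⟨?_, .inr (.inl rfl)⟩)
        rcases ih with rfl | hab | ⟨ha, -⟩
        exacts [.inl rfl, .inr (.inr (.inl hab)), ha]
      · refine .inr (.inr ⟨?_, .inl rfl⟩)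
        rcases ih with rfl | hab | ⟨ha, -⟩
        exacts [.inr (.inl rfl), .inr (.inr (.inr hab)), ha]
      · rcases ih with rfl | hab | ⟨ha, hb⟩
        · exact .inr (.inl hbc)
        · exact .inl (h.unique (h.symm hab) hbc)
        · refine .inr (.inr ⟨ha, ?_⟩)
          rcases hb with rfl | rfl | hb | hb
          · exact .inr (.inr (.inl (h.symm hbc)))
          · exact .inr (.inr (.inr (h.symm hbc)))
          · exact .inl (h.unique hbc hb)
          · exact .inr (.inl (h.unique hbc hb))
  · rintro (rfl | hab | ⟨ha, hb⟩)
    · exact .refl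
    · exact .single (.inr hab)
    · exact (to_p ha).trans (of_p hb)

/-- Make `a` and `b` partners, and pair up their former partners. -/
def rewire (r : α → α → Prop) (a b : α) : α → α → Prop := fun x y =>
  x = a ∧ y = b ∨ x = b ∧ y = a ∨
    x ≠ a ∧ x ≠ b ∧ y ≠ a ∧ y ≠ b ∧ (r x y ∨ x ≠ y ∧ (r x a ∧ r y b ∨ r x b ∧ r y a))

lemma isMatching_rewire (h : IsMatching r) {a b : α} (hab : a ≠ b) :
    IsMatching (rewire r a b) where
  symm := by unfold rewire; grind [h.symm]
  irrefl := by unfold rewire; grind [h.irrefl]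
  unique := by unfold rewire; grind [h.symm, h.unique]

end Matching

lemma dstep_tdiag {n j : ℕ} (hj : j + 1 < n) (T : MDiag n) :
    dstep (tdiag n j) T = fun x y =>
      (x = ⟨j, by omega⟩ ∧ y = ⟨j + 1, hj⟩ ∨ x = ⟨j + 1, hj⟩ ∧ y = ⟨j, by omega⟩) ∨
        T (inl x) (inl y) := by
  funext x y
  simp [dstep, tdiag, Fin.ext_iff]

lemma dcomp_tdiag_eq_rewire {n j : ℕ} (hj : j + 1 < n) {T : MDiag n} (hT : IsMatching T) :
    dcomp (tdiag n j) T = rewire T (inl ⟨j, by omega⟩) (inl ⟨j + 1, hj⟩) := by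
  set p : Fin n := ⟨j, by omega⟩
  set q : Fin n := ⟨j + 1, hj⟩
  have hreach : ∀ a b, dreach (tdiag n j) T a b ↔ a = b ∨ T (inl a) (inl b) ∨
      (a ∈ pairComponent (fun x y => T (inl x) (inl y)) p q ∧
        b ∈ pairComponent (fun x y => T (inl x) (inl y)) p q) := by
    intro a b
    rw [dreach, dstep_tdiag hj]
    exact (hT.comap inl_injective).reflTransGen_pair_or_iff
  have hp : ∀ a : Fin n, (a : ℕ) = j ↔ a = p := fun a => by simp [p, Fin.ext_iff]
  have hq : ∀ a : Fin n, (a : ℕ) = j + 1 ↔ a = q := fun a => by simp [q, Fin.ext_iff]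
  funext x y
  apply propext
  rcases x with u | v <;> rcases y with u' | v' <;>
    simp only [dcomp, tdiag, rewire, hreach, pairComponent, hp, hq, Set.mem_ofPred_eq, ne_eq,
      exists_and_left, exists_eq_or_imp', existsAndEq, true_and, inl.injEq, inr.injEq, reduceCtorEq,
      and_false, false_and, and_self, not_false_eq_true, false_or] <;>
    grind [hT.symm, hT.unique, hT.irrefl]

lemma dprod_cons {n : ℕ} (d : MDiag n) (L : List (MDiag n)) :
    dprod n (d :: L) = dcomp d (dprod n L) := rfl

lemma isMatching_iddiag (n : ℕ) : IsMatching (iddiag n) where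
  symm := by rintro (a | a) (b | b) h <;> simp_all [iddiag]
  irrefl := by rintro (a | a) <;> simp [iddiag]
  unique := by rintro (a | a) (b | b) (c | c) hb hc <;> simp_all [iddiag]

lemma isMatching_dprod_tdiag {n : ℕ} {J : List ℕ} (hJ : ∀ j ∈ J, j + 1 < n) :
    IsMatching (dprod n (J.map (tdiag n))) := by
  induction J with
  | nil => exact isMatching_iddiag n
  | cons j J ih =>
    have hj := hJ j List.mem_cons_self
    have ih := ih fun j' hj' => hJ j' (List.mem_cons_of_mem j hj')
    rw [List.map_cons, dprod_cons, dcomp_tdiag_eq_rewire hj ih]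
    exact isMatching_rewire ih (by simp)

lemma dprod_tdiag_vertical {n : ℕ} {J : List ℕ} (v : Fin n)
    (hJ : ∀ j ∈ J, j + 1 < n ∧ (v : ℕ) ≠ j ∧ (v : ℕ) ≠ j + 1) :
    dprod n (J.map (tdiag n)) (inl v) (inr v) := by
  induction J with
  | nil => exact rfl
  | cons j J ih =>
    obtain ⟨hj, hvj, hvj'⟩ := hJ j List.mem_cons_self
    have hJ' : ∀ j' ∈ J, _ := fun j' hj' => hJ j' (List.mem_cons_of_mem j hj')
    rw [List.map_cons, dprod_cons,
      dcomp_tdiag_eq_rewire hj (isMatching_dprod_tdiag fun j' hj' => (hJ' j' hj').1)]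
    refine .inr (.inr ⟨?_, ?_, by simp, by simp, .inl (ih hJ')⟩) <;> simp [Fin.ext_iff, hvj, hvj']

section Relabel
variable {n : ℕ} (e : Equiv.Perm (Fin n))

def relabel (d : MDiag n) : MDiag n := fun x y => d (Sum.map e e x) (Sum.map e e y)

lemma IsMatching.relabel {T : MDiag n} (hT : IsMatching T) : IsMatching (relabel e T) :=
  hT.comap (Sum.map_injective.2 ⟨e.injective, e.injective⟩)

lemma dreach_relabel {d₁ d₂ : MDiag n} {a b : Fin n} :
    dreach (relabel e d₁) (relabel e d₂) a b ↔ dreach d₁ d₂ (e a) (e b) := by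
  refine ⟨fun h => ReflTransGen.lift e (fun _ _ hs => hs) _ _ h, fun h => ?_⟩
  have h' := ReflTransGen.lift (p := dstep (relabel e d₁) (relabel e d₂)) e.symm
    (fun x y hs => by simpa [dstep, relabel] using hs) _ _ h
  simpa [Function.onFun, dreach] using h'

lemma relabel_dcomp (d₁ d₂ : MDiag n) :
    relabel e (dcomp d₁ d₂) = dcomp (relabel e d₁) (relabel e d₂) := by
  funext x y
  rcases x with u | v <;> rcases y with u' | v' <;>
    simp only [relabel, dcomp, Sum.map_inl, Sum.map_inr, dreach_relabel, e.injective.ne_iff] <;>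
    conv_lhs => rw [e.surjective.exists₂]

lemma relabel_iddiag : relabel e (iddiag n) = iddiag n := by
  funext x y
  rcases x with u | v <;> rcases y with u' | v' <;> simp [relabel, iddiag]

lemma relabel_dprod (L : List (MDiag n)) : relabel e (dprod n L) = dprod n (L.map (relabel e)) := by
  induction L with
  | nil => exact relabel_iddiag e
  | cons d L ih => rw [List.map_cons, dprod_cons, dprod_cons, relabel_dcomp, ih]

end Relabel

section PermDiagErase
variable {n : ℕ} (e : Equiv.Perm (Fin n)) (c : Fin n)

/-- The diagram of the permutation `e` with the edge at top vertex `c`, and so the one at bottom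
vertex `e c`, removed. -/
def permDiagErase : MDiag n := fun x y =>
  match x, y with
  | inl a, inr b => a ≠ c ∧ e a = b
  | inr b, inl a => a ≠ c ∧ e a = b
  | _, _ => False

lemma isMatching_permDiagErase : IsMatching (permDiagErase e c) where
  symm := by rintro (a | a) (b | b) h <;> simp_all [permDiagErase]
  irrefl := by rintro (a | a) <;> simp [permDiagErase]
  unique := by
    rintro (a | a) (b | b) (c | c) hb hc <;> simp only [permDiagErase] at hb hc
    all_goals grind [e.injective.eq_iff]

variable {e c}

lemma dreach_permDiagErase_left {T : MDiag n} (hT : IsMatching T) {a b : Fin n} :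
    dreach (permDiagErase e c) T a b ↔ a = b ∨ T (inl a) (inl b) := by
  have hstep : dstep (permDiagErase e c) T = fun a b => T (inl a) (inl b) := by
    funext a b
    simp [dstep, permDiagErase]
  rw [dreach, hstep]
  exact (hT.comap inl_injective).reflTransGen_iff

lemma dreach_permDiagErase_right {T : MDiag n} (hT : IsMatching T) {a b : Fin n} :
    dreach T (permDiagErase e c) a b ↔ a = b ∨ T (inr a) (inr b) := by
  have hstep : dstep T (permDiagErase e c) = fun a b => T (inr a) (inr b) := by
    funext a b
    simp [dstep, permDiagErase]
  rw [dreach, hstep]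
  exact (hT.comap inr_injective).reflTransGen_iff

lemma dcomp_permDiagErase_iddiag : dcomp (permDiagErase e c) (iddiag n) = permDiagErase e c := by
  funext x y
  rcases x with u | v <;> rcases y with u' | v' <;>
    simp only [dcomp, permDiagErase, iddiag, dreach_permDiagErase_left (isMatching_iddiag n)] <;>
    grind [e.injective.eq_iff]

lemma dcomp_permDiagErase_permDiagErase {f : Equiv.Perm (Fin n)} {d : Fin n} (hd : e c = d) :
    dcomp (permDiagErase e c) (permDiagErase f d) = permDiagErase (e.trans f) c := by
  subst hd
  funext x y
  rcases x with u | v <;> rcases y with u' | v' <;>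
    simp only [dcomp, permDiagErase,
      dreach_permDiagErase_left (isMatching_permDiagErase f (e c))] <;>
    grind [e.injective.eq_iff]

theorem dcomp_permDiagErase_eq_dcomp_relabel {T : MDiag n} (hT : IsMatching T)
    (hc : T (inl (e c)) (inr (e c))) :
    dcomp (permDiagErase e c) T = dcomp (relabel e T) (permDiagErase e c) := by
  funext x y
  apply propext
  rcases x with u | v <;> rcases y with u' | v'
  all_goals try obtain ⟨v, rfl⟩ := e.surjective v
  all_goals try obtain ⟨v', rfl⟩ := e.surjective v'
  all_goals
    simp only [dcomp, permDiagErase, relabel, dreach_permDiagErase_left hT,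
      dreach_permDiagErase_right (hT.relabel e),
      ne_eq, exists_and_left, existsAndEq, and_true, EmbeddingLike.apply_eq_iff_eq, false_or,
      map_inl, map_inr, exists_eq_or_imp']
    grind [hT.symm, hT.unique, hT.irrefl, e.injective.eq_iff]

end PermDiagErase

lemma Fin.val_cycleIcc_apply {n : ℕ} (i j x : Fin n) :
    (Fin.cycleIcc i j x : ℕ) =
      if (x : ℕ) < i ∨ (j : ℕ) < x then (x : ℕ) else if (x : ℕ) = j then (i : ℕ) else x + 1 := by
  have := x.neZero
  by_cases hxi : x < i
  · simp [Fin.cycleIcc_of_lt hxi, Fin.lt_def.1 hxi]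
  by_cases hjx : j < x
  · simp [Fin.cycleIcc_of_gt hjx, Fin.lt_def.1 hjx]
  rw [Fin.cycleIcc_of_le_of_le (not_lt.1 hxi) (not_lt.1 hjx)]
  rw [Fin.lt_def, not_lt] at hxi hjx
  rw [if_neg (show ¬((x : ℕ) < i ∨ (j : ℕ) < x) by omega)]
  by_cases hx : x = j
  · simp [hx]
  · have hx' := Fin.val_ne_of_ne hx
    rw [if_neg hx, if_neg hx', Fin.val_add_one_of_lt' (by omega)]

lemma ldiag_eq_permDiagErase {n j : ℕ} (hj : j + 1 < n) :
    ldiag n j = permDiagErase (Fin.cycleIcc ⟨j, by omega⟩ ⟨j + 1, hj⟩) ⟨j + 1, hj⟩ := by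
  funext x y
  apply propext
  rcases x with u | v <;> rcases y with u' | v' <;>
    simp only [ldiag, permDiagErase, Fin.ext_iff, Fin.val_cycleIcc_apply, ne_eq]
  all_goals split_ifs <;> omega

lemma relabel_cycleIcc_tdiag {n i j k : ℕ} (hij : i < j) (hjk : j < k) (hk : k < n) :
    relabel (Fin.cycleIcc ⟨i, by omega⟩ ⟨k, hk⟩) (tdiag n j) = tdiag n (j - 1) := by
  funext x y
  apply propext
  rcases x with u | v <;> rcases y with u' | v' <;>
    simp only [relabel, tdiag, Fin.ext_iff, Fin.val_cycleIcc_apply, Sum.map_inl, Sum.map_inr]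
  all_goals split_ifs <;> omega

lemma dprod_ldiag_eq_permDiagErase {n i k : ℕ} (hik : i < k) (hk : k < n) :
    dprod n ((List.range (k - i)).map (fun j => ldiag n (k - 1 - j))) =
      permDiagErase (Fin.cycleIcc ⟨i, by omega⟩ ⟨k, hk⟩) ⟨k, hk⟩ := by
  induction k, hik using Nat.le_induction with
  | base =>
    rw [show i.succ - i = 1 by omega, List.range_one, List.map_singleton, dprod_cons,
      show i.succ - 1 - 0 = i by omega, ldiag_eq_permDiagErase hk]
    exact dcomp_permDiagErase_iddiag
  | succ k hik ih =>
    have := (⟨k, by omega⟩ : Fin n).neZero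
    rw [show k + 1 - i = k - i + 1 by omega, List.range_succ_eq_map, List.map_cons, List.map_map,
      dprod_cons, Nat.add_sub_cancel, Nat.sub_zero, ldiag_eq_permDiagErase hk]
    have htail : (fun j => ldiag n (k - j)) ∘ Nat.succ = fun j => ldiag n (k - 1 - j) := by
      funext j
      simp only [Function.comp_apply]
      congr 1
      omega
    rw [htail, ih (by omega),
      dcomp_permDiagErase_permDiagErase (Fin.cycleIcc_of_last (Fin.mk_le_mk.2 (by omega)))]
    congr 1
    ext x
    exact congrArg Fin.val <| congrFun
      (Fin.cycleIcc.trans (Fin.mk_le_mk.2 (by omega)) (Fin.mk_le_mk.2 (by omega))) x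

/-- (Slide lemma) In the Motzkin monoid `M_n`, if `T` is a product of generators from
`{t_{i+1}, …, t_{k-1}}`, then `(l_{k-1} l_{k-2} ⋯ l_i) T = T' (l_{k-1} l_{k-2} ⋯ l_i)`
where `T'` is obtained from `T` by replacing each `t_j` with `t_{j-1}`. -/
theorem motzkin_slide (n i k : ℕ) (hik : i < k) (hk : k < n) (J : List ℕ)
    (hJ : ∀ j ∈ J, i + 1 ≤ j ∧ j ≤ k - 1) :
    dcomp (dprod n ((List.range (k - i)).map (fun j => ldiag n (k - 1 - j))))
        (dprod n (J.map (tdiag n))) =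
      dcomp (dprod n (J.map (fun j => tdiag n (j - 1))))
        (dprod n ((List.range (k - i)).map (fun j => ldiag n (k - 1 - j)))) := by
  have := (⟨k, hk⟩ : Fin n).neZero
  have hJ' : ∀ j ∈ J, i < j ∧ j < k := fun j hj => by have := hJ j hj; omega
  have hT : IsMatching (dprod n (J.map (tdiag n))) :=
    isMatching_dprod_tdiag fun j hj => by have := hJ' j hj; omega
  rw [dprod_ldiag_eq_permDiagErase hik hk, dcomp_permDiagErase_eq_dcomp_relabel hT ?vertical,
    relabel_dprod, List.map_map,
    List.map_congr_left fun j hj => relabel_cycleIcc_tdiag (hJ' j hj).1 (hJ' j hj).2 hk]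
  case vertical =>
    rw [Fin.cycleIcc_of_last (Fin.mk_le_mk.2 hik.le)]
    exact dprod_tdiag_vertical _ fun j hj => by
      have := hJ' j hj
      exact ⟨by omega, show i ≠ j by omega, show i ≠ j + 1 by omega⟩
end

section
/- In the Motzkin monoid M_n, let k < n, let E be the product of all p_i for k ≤ i ≤ n, and let T be any product of Temperley-Lieb generators t_j with j ≥ k. Then E · T · E = E. -/
/-!
Call a diagram `IdBelow k` if it is the identity on the strands `0, …, k-1` and none of its
horizontal edges touches them. A path through the middle row of a stacked product only moves
along horizontal edges, so it can neither enter nor leave the first `k` vertices; hence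
`IdBelow k` is closed under stacking, and it contains `E` and every `t_j` with `j ≥ k`. In
`E · T` every top vertex `≥ k` is empty, as in `E`, and stacking such an `IdBelow k` diagram
on `E` leaves only the vertical edges below `k`, i.e. gives `E` back.
-/

namespace Motzkin

variable {n k : ℕ}

def partialId (n : ℕ) (P : Fin n → Prop) : MDiag n := fun x y =>
  match x, y with
  | .inl a, .inr b => a = b ∧ P a
  | .inr a, .inl b => a = b ∧ P a
  | _, _ => False

theorem iddiag_eq_partialId : iddiag n = partialId n (fun _ => True) := by
  funext x y
  rcases x with a | a <;> rcases y with b | b <;> simp [iddiag, partialId]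

theorem pdiag_eq_partialId (i : ℕ) : pdiag n i = partialId n (fun a => (a : ℕ) ≠ i) := by
  funext x y
  rcases x with a | a <;> rcases y with b | b <;> rfl

theorem dreach_partialId_iff {P Q : Fin n → Prop} {m m' : Fin n} :
    dreach (partialId n P) (partialId n Q) m m' ↔ m' = m :=
  Relation.reflTransGen_iff_eq fun _ h => h.elim id id

theorem dcomp_partialId (P Q : Fin n → Prop) :
    dcomp (partialId n P) (partialId n Q) = partialId n (fun a => P a ∧ Q a) := by
  funext x y
  rcases x with a | a <;> rcases y with b | b <;>
    simp only [dcomp, partialId, dreach_partialId_iff] <;> grind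

theorem dprod_pdiag_range (k m : ℕ) :
    dprod n ((List.range m).map fun j => pdiag n (k + j)) =
      partialId n (fun a => (a : ℕ) < k ∨ k + m ≤ a) := by
  induction m generalizing k with
  | zero =>
    rw [List.range_zero, List.map_nil, dprod, List.foldr_nil, iddiag_eq_partialId]
    congr 1
    ext a
    exact iff_of_true trivial (by omega)
  | succ m ih =>
    have hshift : (fun j => pdiag n (k + j)) ∘ Nat.succ = fun j => pdiag n (k + 1 + j) := by
      funext j
      simp only [Function.comp, Nat.succ_eq_add_one, Nat.add_left_comm, Nat.add_comm]
    rw [List.range_succ_eq_map, List.map_cons, List.map_map, hshift]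
    change dcomp (pdiag n (k + 0)) (dprod n _) = _
    rw [ih, pdiag_eq_partialId, dcomp_partialId]
    congr 1
    ext a
    omega

def EqBelow (k : ℕ) (R : Fin n → Fin n → Prop) : Prop :=
  ∀ a b, R a b → (a : ℕ) < k ∨ (b : ℕ) < k → a = b

section EqBelow

variable {R S T : Fin n → Fin n → Prop}

theorem EqBelow.flip (hR : EqBelow k R) : EqBelow k (flip R) :=
  fun a b hab hlt => (hR b a hab hlt.symm).symm

theorem EqBelow.comp (hR : EqBelow k R) (hS : EqBelow k S) :
    EqBelow k (Relation.Comp R S) := by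
  rintro a c ⟨b, hab, hbc⟩ (ha | hc)
  · obtain rfl := hR a b hab (.inl ha)
    exact hS a c hbc (.inl ha)
  · obtain rfl := hS b c hbc (.inr hc)
    exact hR a b hab (.inr hc)

theorem EqBelow.chain (hR : EqBelow k R) (hS : EqBelow k S) (hT : EqBelow k T) :
    EqBelow k (fun a b => ∃ m m', R a m ∧ S m m' ∧ T m' b) :=
  fun a b ⟨m, m', h₁, h₂, h₃⟩ => (hR.comp hS).comp hT a b ⟨m', ⟨m, h₁, h₂⟩, h₃⟩

theorem EqBelow.le_of_ne (hR : EqBelow k R) {a b : Fin n} (hab : R a b) (hne : a ≠ b) :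
    k ≤ (a : ℕ) ∧ k ≤ (b : ℕ) := by
  by_contra hlt
  exact hne (hR a b hab (by omega))

end EqBelow

theorem eqBelow_dreach {d₁ d₂ : MDiag n}
    (h : ∀ p q, dstep d₁ d₂ p q → k ≤ (p : ℕ) ∧ k ≤ (q : ℕ)) : EqBelow k (dreach d₁ d₂) := by
  rintro m m' hr (hm | hm')
  · rcases hr.cases_head with rfl | ⟨c, hs, -⟩
    · rfl
    · exact absurd (h _ _ hs).1 (by omega)
  · rcases hr.cases_tail with rfl | ⟨c, -, hs⟩
    · rfl
    · exact absurd (h _ _ hs).2 (by omega)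

structure IdBelow (k : ℕ) (T : MDiag n) : Prop where
  vert_self : ∀ a : Fin n, (a : ℕ) < k → T (.inl a) (.inr a)
  eqBelow_vert : EqBelow k (fun a b => T (.inl a) (.inr b))
  le_of_top : ∀ a b : Fin n, T (.inl a) (.inl b) → k ≤ (a : ℕ) ∧ k ≤ (b : ℕ)
  le_of_bot : ∀ a b : Fin n, T (.inr a) (.inr b) → k ≤ (a : ℕ) ∧ k ≤ (b : ℕ)

section IdBelow

variable {A B : MDiag n}

theorem IdBelow.dstep_le (hA : IdBelow k A) (hB : IdBelow k B) {p q : Fin n}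
    (h : dstep A B p q) : k ≤ (p : ℕ) ∧ k ≤ (q : ℕ) :=
  h.elim (hA.le_of_bot p q) (hB.le_of_top p q)

theorem IdBelow.dcomp (hA : IdBelow k A) (hB : IdBelow k B) : IdBelow k (dcomp A B) := by
  have hR := eqBelow_dreach fun _ _ => hA.dstep_le hB
  refine ⟨fun a ha => ⟨a, a, hA.vert_self a ha, .refl, hB.vert_self a ha⟩,
    hA.eqBelow_vert.chain hR hB.eqBelow_vert, ?_, ?_⟩
  · rintro a b (h | ⟨hne, hpath⟩)
    · exact hA.le_of_top a b h
    · exact (hA.eqBelow_vert.chain hR hA.eqBelow_vert.flip).le_of_ne hpath hne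
  · rintro a b (h | ⟨hne, hpath⟩)
    · exact hB.le_of_bot a b h
    · exact (hB.eqBelow_vert.flip.chain hR hB.eqBelow_vert).le_of_ne hpath hne

end IdBelow

theorem idBelow_iddiag : IdBelow k (iddiag n) :=
  ⟨fun _ _ => rfl, fun _ _ h _ => h, fun _ _ h => h.elim, fun _ _ h => h.elim⟩

theorem idBelow_tdiag {j : ℕ} (hj : k ≤ j) : IdBelow k (tdiag n j) where
  vert_self _ _ := ⟨rfl, by omega, by omega⟩
  eqBelow_vert _ _ h _ := h.1
  le_of_top _ _ h := by rcases h with h | h <;> omega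
  le_of_bot _ _ h := by rcases h with h | h <;> omega

theorem idBelow_partialId_lt : IdBelow k (partialId n (fun a => (a : ℕ) < k)) :=
  ⟨fun _ ha => ⟨rfl, ha⟩, fun _ _ h _ => h.1, fun _ _ h => h.elim, fun _ _ h => h.elim⟩

theorem idBelow_dprod {L : List (MDiag n)} (hL : ∀ d ∈ L, IdBelow k d) :
    IdBelow k (dprod n L) := by
  induction L with
  | nil => exact idBelow_iddiag
  | cons d L ih =>
    obtain ⟨hd, hL⟩ := List.forall_mem_cons.1 hL
    exact hd.dcomp (ih hL)

def TopSupportedIn (P : Fin n → Prop) (T : MDiag n) : Prop :=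
  ∀ a y, T (.inl a) y → P a

theorem topSupportedIn_partialId (P : Fin n → Prop) : TopSupportedIn P (partialId n P) := by
  rintro a (b | b) h
  exacts [h.elim, h.2]

theorem TopSupportedIn.dcomp {P : Fin n → Prop} {A : MDiag n} (hA : TopSupportedIn P A)
    (B : MDiag n) : TopSupportedIn P (dcomp A B) := by
  rintro a (b | b) h
  · rcases h with h | ⟨-, _, _, h, -⟩ <;> exact hA _ _ h
  · obtain ⟨_, _, h, -⟩ := h
    exact hA _ _ h

theorem dcomp_partialId_lt {Y : MDiag n} (hY : IdBelow k Y)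
    (htop : TopSupportedIn (fun a => (a : ℕ) < k) Y) :
    dcomp Y (partialId n (fun a => (a : ℕ) < k)) = partialId n (fun a => (a : ℕ) < k) := by
  have hE : IdBelow k (partialId n (fun a => (a : ℕ) < k)) := idBelow_partialId_lt
  have hR := eqBelow_dreach fun _ _ => hY.dstep_le hE
  have hvert : ∀ a b, dcomp Y (partialId n (fun a => (a : ℕ) < k)) (.inl a) (.inr b) ↔
      a = b ∧ (a : ℕ) < k := by
    refine fun a b => ⟨?_, ?_⟩
    · rintro ⟨m, m', h, hr, h'⟩
      have ha : (a : ℕ) < k := htop _ _ h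
      exact ⟨hY.eqBelow_vert.chain hR hE.eqBelow_vert a b ⟨m, m', h, hr, h'⟩ (.inl ha), ha⟩
    · rintro ⟨rfl, ha⟩
      exact ⟨a, a, hY.vert_self a ha, .refl, rfl, ha⟩
  funext x y
  rcases x with a | a <;> rcases y with b | b
  · refine propext ⟨?_, False.elim⟩
    rintro (h | ⟨hne, m, m', h, hr, h'⟩)
    · exact absurd (htop _ _ h) (not_lt.2 (hY.le_of_top a b h).1)
    · exact hne (hY.eqBelow_vert.chain hR hY.eqBelow_vert.flip a b ⟨m, m', h, hr, h'⟩
        (.inl (htop _ _ h)))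
  · exact propext (hvert a b)
  -- `dcomp` defines its `(inr b, inl a)` entry to be its `(inl a, inr b)` entry.
  · exact propext ((hvert b a).trans ⟨fun ⟨h, h'⟩ => ⟨h.symm, h ▸ h'⟩,
      fun ⟨h, h'⟩ => ⟨h.symm, h ▸ h'⟩⟩)
  · refine propext ⟨?_, False.elim⟩
    rintro (h | ⟨hne, m, m', ⟨rfl, hm⟩, hr, h'⟩)
    · exact h
    · exact hne (hE.eqBelow_vert.flip.chain hR hE.eqBelow_vert m b ⟨m, m', ⟨rfl, hm⟩, hr, h'⟩
        (.inl hm))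

end Motzkin

open Motzkin in
theorem motzkin_t_death_general (n k : ℕ) (J : List ℕ)
    (hJ : ∀ j ∈ J, k ≤ j ∧ j + 1 < n) :
    dcomp
        (dcomp (dprod n ((List.range (n - k)).map (fun j => pdiag n (k + j))))
          (dprod n (J.map (tdiag n))))
        (dprod n ((List.range (n - k)).map (fun j => pdiag n (k + j)))) =
      dprod n ((List.range (n - k)).map (fun j => pdiag n (k + j))) := by
  have hE : dprod n ((List.range (n - k)).map (fun j => pdiag n (k + j))) =
      partialId n (fun a => (a : ℕ) < k) := by
    rw [dprod_pdiag_range]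
    congr 1
    ext a
    omega
  have hT : IdBelow k (dprod n (J.map (tdiag n))) := idBelow_dprod fun d hd => by
    obtain ⟨j, hj, rfl⟩ := List.mem_map.1 hd
    exact idBelow_tdiag (hJ j hj).1
  rw [hE]
  exact dcomp_partialId_lt (idBelow_partialId_lt.dcomp hT)
    ((topSupportedIn_partialId _).dcomp _)

/-- In the Motzkin monoid `M_n`, with `E` the product of all `p_i` for `k ≤ i` (up to the
last vertex, 0-indexed) and `T` any product of Temperley-Lieb generators `t_j` with
`j ≥ k`, one has `E · T · E = E`. -/
theorem motzkin_t_death (n k : ℕ) (hk : k < n) (J : List ℕ)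
    (hJ : ∀ j ∈ J, k ≤ j ∧ j + 1 < n) :
    dcomp
        (dcomp (dprod n ((List.range (n - k)).map (fun j => pdiag n (k + j))))
          (dprod n (J.map (tdiag n))))
        (dprod n ((List.range (n - k)).map (fun j => pdiag n (k + j)))) =
      dprod n ((List.range (n - k)).map (fun j => pdiag n (k + j))) :=
  motzkin_t_death_general n k J hJ
end

section
/- Every diagram d in the Motzkin monoid M_n factors as d = r · t · l where r ∈ RP_n, t ∈ TL_n, and l ∈ LP_n; here r is the unique right planar rook diagram with top set τ(d) and bottom set {1,...,|τ(d)|}, l is the unique left planar rook diagram with bottom set β(d) and top set {1,...,|β(d)|}, and t is a Temperley-Lieb diagram. -/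
/-- The set of non-empty top vertices `τ(d)` of a diagram. -/
def topSet {n : ℕ} (d : MDiag n) : Set (Fin n) := {a | ∃ y, d (Sum.inl a) y}

/-- The set of non-empty bottom vertices `β(d)` of a diagram. -/
def dbotSet {n : ℕ} (d : MDiag n) : Set (Fin n) := {b | ∃ y, d (Sum.inr b) y}

/-- The position of a vertex in the cyclic boundary order (top row left-to-right,
then bottom row right-to-left). -/
def mpos (n : ℕ) : MVert n → ℕ := fun x =>
  match x with
  | Sum.inl a => (a : ℕ)
  | Sum.inr b => 2 * n - 1 - (b : ℕ)

/-- The edges of `d` are pairwise non-crossing (planarity). -/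
def NonCrossing {n : ℕ} (d : MDiag n) : Prop :=
  ∀ x y u v, d x y → d u v →
    mpos n x < mpos n u → mpos n u < mpos n y → mpos n y < mpos n v → False

/-- `d` is a Motzkin diagram: a symmetric, irreflexive, planar partial matching. -/
def IsMotzkin {n : ℕ} (d : MDiag n) : Prop :=
  (∀ x y, d x y → d y x) ∧ (∀ x, ¬ d x x) ∧
    (∀ x y z, d x y → d x z → y = z) ∧ NonCrossing d

/-- `d` is a Temperley-Lieb diagram: a Motzkin diagram with no empty vertices. -/
def IsTLdiag {n : ℕ} (d : MDiag n) : Prop := IsMotzkin d ∧ ∀ x, ∃ y, d x y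

/-- `d` is a right planar rook diagram: a Motzkin diagram with no horizontal edges,
each edge having its top endpoint weakly to the right of its bottom endpoint. -/
def IsRPdiag {n : ℕ} (d : MDiag n) : Prop :=
  IsMotzkin d ∧ (∀ a b : Fin n, ¬ d (Sum.inl a) (Sum.inl b)) ∧
    (∀ a b : Fin n, ¬ d (Sum.inr a) (Sum.inr b)) ∧
    (∀ a b : Fin n, d (Sum.inl a) (Sum.inr b) → b ≤ a)

/-- `d` is a left planar rook diagram. -/
def IsLPdiag {n : ℕ} (d : MDiag n) : Prop :=
  IsMotzkin d ∧ (∀ a b : Fin n, ¬ d (Sum.inl a) (Sum.inl b)) ∧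
    (∀ a b : Fin n, ¬ d (Sum.inr a) (Sum.inr b)) ∧
    (∀ a b : Fin n, d (Sum.inl a) (Sum.inr b) → a ≤ b)

/-!
Write `τ = τ(d)` and `β = β(d)`. The rook diagram `r` joins the `i`-th vertex of `τ` to bottom
vertex `i`, and `l` joins top vertex `i` to the `i`-th vertex of `β`. Multiplying a matching by a
rook diagram, on either side, only relabels its vertices along the rook diagram, so `r · t · l`
is `t` relabelled by the map that sends the `i`-th vertex of `τ` (resp. `β`) to position `i` of
its row. So we take for `t` the diagram `d` transported along the inverse of this map. It is
planar because the relabelling is monotone along the boundary. Its empty vertices are the top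
vertices `≥ |τ|` and the bottom vertices `≥ |β|`. They form a contiguous interval of the
boundary, of even length `2n - |τ| - |β|` because `d` is a matching, so nested arcs fill it
without crossings. Those arcs avoid the relabelled vertices, so they do not affect `r · t · l`.
-/

open Sum Relation

section Matching

variable {α β : Type*}

structure IsMatching_s19 (R : α → α → Prop) : Prop where
  symm : ∀ x y, R x y → R y x
  irrefl : ∀ x, ¬ R x x
  unique : ∀ x y z, R x y → R x z → y = z

-- A path of length two returns to its start, since the middle vertex has a unique partner.
theorem Relation.reflTransGen_iff_eq_or_of_symm_of_unique {r : α → α → Prop}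
    (hs : ∀ a b, r a b → r b a) (hu : ∀ a b c, r a b → r a c → b = c) {a b : α} :
    ReflTransGen r a b ↔ a = b ∨ r a b := by
  refine ⟨fun h => ?_, fun h => h.elim (fun e => e ▸ .refl) .single⟩
  induction h with
  | refl => exact .inl rfl
  | tail _ hbc ih =>
    rcases ih with rfl | hab
    · exact .inr hbc
    · exact .inl (hu _ _ _ (hs _ _ hab) hbc)

namespace IsMatching_s19

variable {R S : α → α → Prop}

theorem leftUnique (hR : IsMatching_s19 R) : Relator.LeftUnique R :=
  fun _ _ _ hac hbc => hR.unique _ _ _ (hR.symm _ _ hac) (hR.symm _ _ hbc)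

theorem onFun (hR : IsMatching_s19 R) {f : β → α} (hf : Function.Injective f) :
    IsMatching_s19 (Function.onFun R f) where
  symm _ _ h := hR.symm _ _ h
  irrefl a := hR.irrefl (f a)
  unique _ _ _ hb hc := hf (hR.unique _ _ _ hb hc)

theorem sup (hR : IsMatching_s19 R) (hS : IsMatching_s19 S) (hRS : ∀ x y z, R x y → ¬ S x z) :
    IsMatching_s19 (R ⊔ S) where
  symm _ _ h := h.imp (hR.symm _ _) (hS.symm _ _)
  irrefl x h := h.elim (hR.irrefl x) (hS.irrefl x)
  unique x y z := by
    rintro (hy | hy) (hz | hz)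
    · exact hR.unique _ _ _ hy hz
    · exact (hRS _ _ _ hy hz).elim
    · exact (hRS _ _ _ hz hy).elim
    · exact hS.unique _ _ _ hy hz

-- The partner map is an involution whose support is the set of matched points.
theorem even_ncard_matched [Finite α] (hR : IsMatching_s19 R) : Even {x | ∃ y, R x y}.ncard := by
  classical
  have := Fintype.ofFinite α
  let partner x := if h : ∃ y, R x y then h.choose else x
  have partner_eq : ∀ x y, R x y → partner x = y := fun x y h => by
    simp only [partner, dif_pos (⟨y, h⟩ : ∃ y, R x y)]
    exact hR.unique _ _ _ (Exists.choose_spec _) h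
  have partner_involutive : Function.Involutive partner := fun x => by
    by_cases h : ∃ y, R x y
    · obtain ⟨y, hy⟩ := h
      rw [partner_eq x y hy, partner_eq y x (hR.symm _ _ hy)]
    · simp only [partner, dif_neg h]
  have support_eq : (partner_involutive.toPerm.support : Set α) = {x | ∃ y, R x y} := by
    ext x
    by_cases h : ∃ y, R x y
    · obtain ⟨y, hy⟩ := h
      simp only [Finset.mem_coe, Equiv.Perm.mem_support, Function.Involutive.coe_toPerm,
        partner_eq x y hy, Set.mem_ofPred_eq]
      exact ⟨fun _ => ⟨y, hy⟩, fun _ hxy => hR.irrefl x (hxy ▸ hy)⟩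
    · simp [partner, h]
  rw [← support_eq, Set.ncard_coe_finset, even_iff_two_dvd]
  exact Equiv.Perm.two_dvd_card_support (Equiv.ext fun x => partner_involutive x)

end IsMatching_s19

theorem Relator.BiUnique.flip {r : α → β → Prop} (h : Relator.BiUnique r) :
    Relator.BiUnique (flip r) :=
  ⟨fun _ _ _ h₁ h₂ => h.2 h₁ h₂, fun _ _ _ h₁ h₂ => h.1 h₁ h₂⟩

theorem Relator.biUnique_eq : Relator.BiUnique (@Eq α) :=
  ⟨fun _ _ _ h h' => h.trans h'.symm, fun _ _ _ h h' => h.symm.trans h'⟩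

def pullback (e : α → β → Prop) (R : β → β → Prop) (x y : α) : Prop :=
  ∃ x' y', e x x' ∧ e y y' ∧ R x' y'

variable {e : α → β → Prop} {R S : β → β → Prop}

theorem IsMatching_s19.pullback (hR : IsMatching_s19 R) (he : Relator.BiUnique e) :
    IsMatching_s19 (pullback e R) where
  symm _ _ := fun ⟨x', y', hx, hy, h⟩ => ⟨y', x', hy, hx, hR.symm _ _ h⟩
  irrefl x := fun ⟨x', y', hx, hy, h⟩ => hR.irrefl x' (he.2 hy hx ▸ h)
  unique x y z := fun ⟨x', y', hx, hy, h⟩ ⟨x'', z', hx', hz, h'⟩ => by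
    rw [he.2 hx hx'] at h
    exact he.1 hy (hR.unique _ _ _ h h' ▸ hz)

theorem pullback_pullback {γ : Type*} (e' : β → γ → Prop) (R : γ → γ → Prop) :
    pullback e (pullback e' R) = pullback (Comp e e') R := by
  funext x y
  apply propext
  constructor
  · rintro ⟨x', y', hx, hy, x'', y'', hx', hy', h⟩
    exact ⟨x'', y'', ⟨x', hx, hx'⟩, ⟨y', hy, hy'⟩, h⟩
  · rintro ⟨x'', y'', ⟨x', hx, hx'⟩, ⟨y', hy, hy'⟩, h⟩
    exact ⟨x', y', hx, hy, x'', y'', hx', hy', h⟩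

theorem pullback_pullback_flip {R : α → α → Prop} (he : Relator.LeftUnique e)
    (hR : ∀ x y, R x y → R y x) (hdom : ∀ x y, R x y → ∃ x', e x x') :
    pullback e (pullback (flip e) R) = R := by
  funext x y
  apply propext
  constructor
  · rintro ⟨x', y', hx, hy, x'', y'', hx', hy', h⟩
    rwa [he hx' hx, he hy' hy] at h
  · intro h
    obtain ⟨x', hx⟩ := hdom x y h
    obtain ⟨y', hy⟩ := hdom y x (hR x y h)
    exact ⟨x', y', hx, hy, x, y, hx, hy, h⟩

theorem pullback_sup_eq_left (hS : ∀ x x' y, e x x' → ¬ S x' y) :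
    pullback e (R ⊔ S) = pullback e R := by
  funext x y
  apply propext
  constructor
  · rintro ⟨x', y', hx, hy, h | h⟩
    exacts [⟨x', y', hx, hy, h⟩, (hS x x' y' hx h).elim]
  · exact fun ⟨x', y', hx, hy, h⟩ => ⟨x', y', hx, hy, .inl h⟩

end Matching

section LiftRel

variable {α β γ δ ε ζ : Type*} {r : α → γ → Prop} {s : β → δ → Prop}

theorem Relator.BiUnique.sumLiftRel (hr : Relator.BiUnique r) (hs : Relator.BiUnique s) :
    Relator.BiUnique (LiftRel r s) := by
  constructor
  · rintro _ _ _ (⟨ha⟩ | ⟨ha⟩) h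
    · cases h with | inl hb => exact congrArg inl (hr.1 ha hb)
    · cases h with | inr hb => exact congrArg inr (hs.1 ha hb)
  · rintro _ _ _ (⟨ha⟩ | ⟨ha⟩) h
    · cases h with | inl hb => exact congrArg inl (hr.2 ha hb)
    · cases h with | inr hb => exact congrArg inr (hs.2 ha hb)

theorem Sum.liftRel_comp_liftRel (r' : γ → ε → Prop) (s' : δ → ζ → Prop) :
    Comp (LiftRel r s) (LiftRel r' s') = LiftRel (Comp r r') (Comp s s') := by
  funext x z
  apply propext
  constructor
  · rintro ⟨y, h, h'⟩
    cases h <;> cases h'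
    exacts [.inl ⟨_, ‹_›, ‹_›⟩, .inr ⟨_, ‹_›, ‹_›⟩]
  · rintro (⟨⟨y, h, h'⟩⟩ | ⟨⟨y, h, h'⟩⟩)
    exacts [⟨inl y, .inl h, .inl h'⟩, ⟨inr y, .inr h, .inr h'⟩]

variable {R : γ ⊕ δ → γ ⊕ δ → Prop} {a a' : α} {b b' : β}

@[simp] theorem pullback_liftRel_inl_inl :
    pullback (LiftRel r s) R (inl a) (inl a') ↔
      ∃ c c', r a c ∧ r a' c' ∧ R (inl c) (inl c') := by
  simp [pullback, Sum.exists]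

@[simp] theorem pullback_liftRel_inl_inr :
    pullback (LiftRel r s) R (inl a) (inr b) ↔ ∃ c d, r a c ∧ s b d ∧ R (inl c) (inr d) := by
  simp [pullback, Sum.exists]

@[simp] theorem pullback_liftRel_inr_inl :
    pullback (LiftRel r s) R (inr b) (inl a) ↔ ∃ d c, s b d ∧ r a c ∧ R (inr d) (inl c) := by
  simp [pullback, Sum.exists]

@[simp] theorem pullback_liftRel_inr_inr :
    pullback (LiftRel r s) R (inr b) (inr b') ↔
      ∃ d d', s b d ∧ s b' d' ∧ R (inr d) (inr d') := by
  simp [pullback, Sum.exists]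

end LiftRel

section Boundary

variable {n : ℕ}

theorem mpos_injective : Function.Injective (mpos n) := by
  rintro (a | a) (b | b) h <;> simp only [mpos] at h <;> have := a.isLt <;> have := b.isLt
  · exact congrArg inl (Fin.ext h)
  · omega
  · omega
  · exact congrArg inr (Fin.ext (by omega))

theorem exists_mpos_eq {p : ℕ} (hp : p < 2 * n) : ∃ x, mpos n x = p := by
  by_cases h : p < n
  · exact ⟨inl ⟨p, h⟩, rfl⟩
  · exact ⟨inr ⟨2 * n - 1 - p, by omega⟩, by simp only [mpos]; omega⟩

theorem mpos_inl_lt_mpos_inr (a b : Fin n) : mpos n (inl a) < mpos n (inr b) := by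
  simp only [mpos]
  omega

theorem mpos_lt_mpos_iff_of_liftRel {r s : Fin n → Fin n → Prop}
    (hr : ∀ a a' b b', r a a' → r b b' → (a < b ↔ a' < b'))
    (hs : ∀ a a' b b', s a a' → s b b' → (a < b ↔ a' < b'))
    {x x' y y' : MVert n} (hx : LiftRel r s x x') (hy : LiftRel r s y y') :
    mpos n x < mpos n y ↔ mpos n x' < mpos n y' := by
  rcases hx with ⟨hx⟩ | ⟨hx⟩ <;> rcases hy with ⟨hy⟩ | ⟨hy⟩
  · exact hr _ _ _ _ hx hy
  · exact iff_of_true (mpos_inl_lt_mpos_inr _ _) (mpos_inl_lt_mpos_inr _ _)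
  · exact iff_of_false (mpos_inl_lt_mpos_inr _ _).not_gt (mpos_inl_lt_mpos_inr _ _).not_gt
  · have := hs _ _ _ _ hy hx
    simp only [mpos, Fin.lt_def] at this ⊢
    omega

theorem NonCrossing.pullback {d : MDiag n} (hd : NonCrossing d) {e : MVert n → MVert n → Prop}
    (he : ∀ x x' y y', e x x' → e y y' → (mpos n x < mpos n y ↔ mpos n x' < mpos n y')) :
    NonCrossing (pullback e d) := by
  rintro x y u v ⟨x', y', hx, hy, hxy⟩ ⟨u', v', hu, hv, huv⟩ h₁ h₂ h₃
  exact hd x' y' u' v' hxy huv ((he _ _ _ _ hx hu).1 h₁) ((he _ _ _ _ hu hy).1 h₂)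
    ((he _ _ _ _ hy hv).1 h₃)

theorem NonCrossing.sup {R S : MDiag n} (hR : NonCrossing R) (hS : NonCrossing S) {I : Set ℕ}
    (hI : I.OrdConnected) (hRI : ∀ x y, R x y → mpos n x ∉ I ∧ mpos n y ∉ I)
    (hSI : ∀ x y, S x y → mpos n x ∈ I ∧ mpos n y ∈ I) : NonCrossing (R ⊔ S) := by
  rintro x y u v (hxy | hxy) (huv | huv) h₁ h₂ h₃
  · exact hR x y u v hxy huv h₁ h₂ h₃
  · exact (hRI x y hxy).2 (hI.out (hSI u v huv).1 (hSI u v huv).2 ⟨h₂.le, h₃.le⟩)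
  · exact (hRI u v huv).1 (hI.out (hSI x y hxy).1 (hSI x y hxy).2 ⟨h₁.le, h₂.le⟩)
  · exact hS x y u v hxy huv h₁ h₂ h₃

/-- The nested arcs joining the boundary positions `lo, …, hi - 1` from the outside in. -/
def rainbow (n lo hi : ℕ) : MDiag n := fun x y =>
  lo ≤ mpos n x ∧ lo ≤ mpos n y ∧ mpos n x + mpos n y + 1 = lo + hi

variable {lo hi : ℕ}

theorem rainbow_isMatching (h : Even (lo + hi)) : IsMatching_s19 (rainbow n lo hi) where
  symm _ _ := fun ⟨h₁, h₂, h₃⟩ => ⟨h₂, h₁, by omega⟩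
  irrefl _ := fun ⟨_, _, h'⟩ => by obtain ⟨k, hk⟩ := h; omega
  unique _ _ _ := fun ⟨_, _, h₁⟩ ⟨_, _, h₂⟩ => mpos_injective (by omega)

theorem rainbow_nonCrossing : NonCrossing (rainbow n lo hi) := by
  rintro x y u v ⟨-, -, h⟩ ⟨-, -, h'⟩ _ _ _
  omega

theorem mpos_mem_Ico_of_rainbow {x y : MVert n} (h : rainbow n lo hi x y) :
    mpos n x ∈ Set.Ico lo hi ∧ mpos n y ∈ Set.Ico lo hi := by
  obtain ⟨h₁, h₂, h₃⟩ := h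
  simp only [Set.mem_Ico]
  omega

theorem exists_rainbow (hhi : hi ≤ 2 * n) {x : MVert n} (hx : mpos n x ∈ Set.Ico lo hi) :
    ∃ y, rainbow n lo hi x y := by
  obtain ⟨hlo, hhi'⟩ := hx
  obtain ⟨y, hy⟩ := exists_mpos_eq (n := n) (p := lo + hi - 1 - mpos n x) (by omega)
  exact ⟨y, hlo, by omega, by omega⟩

end Boundary

section Rook

variable {n : ℕ}

theorem IsMotzkin.isMatching {d : MDiag n} (hd : IsMotzkin d) : IsMatching_s19 d :=
  ⟨hd.1, hd.2.1, hd.2.2.1⟩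

structure IsRookDiag (R : MDiag n) : Prop where
  isMatching : IsMatching_s19 R
  not_inl_inl : ∀ a b, ¬ R (inl a) (inl b)
  not_inr_inr : ∀ a b, ¬ R (inr a) (inr b)

theorem IsRookDiag.isMotzkin {R : MDiag n} (hR : IsRookDiag R) (hnc : NonCrossing R) :
    IsMotzkin R :=
  ⟨hR.isMatching.symm, hR.isMatching.irrefl, hR.isMatching.unique, hnc⟩

theorem IsRookDiag.biUnique_inl_inr {R : MDiag n} (hR : IsRookDiag R) :
    Relator.BiUnique fun a b => R (inl a) (inr b) :=
  ⟨fun _ _ _ h h' => inl_injective (hR.isMatching.leftUnique h h'),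
    fun _ _ _ h h' => inr_injective (hR.isMatching.unique _ _ _ h h')⟩

theorem IsRookDiag.biUnique_inr_inl {R : MDiag n} (hR : IsRookDiag R) :
    Relator.BiUnique fun a b => R (inr a) (inl b) :=
  ⟨fun _ _ _ h h' => inr_injective (hR.isMatching.leftUnique h h'),
    fun _ _ _ h h' => inl_injective (hR.isMatching.unique _ _ _ h h')⟩

variable {d₁ d₂ : MDiag n} {m m' : Fin n}

theorem dreach_iff_of_not_inr_inr (h₁ : ∀ a b, ¬ d₁ (inr a) (inr b)) (h₂ : IsMatching_s19 d₂) :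
    dreach d₁ d₂ m m' ↔ m = m' ∨ d₂ (inl m) (inl m') := by
  have hstep : dstep d₁ d₂ = fun a b => d₂ (inl a) (inl b) := by
    funext a b
    simp [dstep, h₁]
  have h := h₂.onFun (inl_injective (β := Fin n))
  rw [dreach, hstep, reflTransGen_iff_eq_or_of_symm_of_unique h.symm h.unique]

theorem dreach_iff_of_not_inl_inl (h₁ : IsMatching_s19 d₁) (h₂ : ∀ a b, ¬ d₂ (inl a) (inl b)) :
    dreach d₁ d₂ m m' ↔ m = m' ∨ d₁ (inr m) (inr m') := by
  have hstep : dstep d₁ d₂ = fun a b => d₁ (inr a) (inr b) := by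
    funext a b
    simp [dstep, h₂]
  have h := h₁.onFun (inr_injective (α := Fin n))
  rw [dreach, hstep, reflTransGen_iff_eq_or_of_symm_of_unique h.symm h.unique]

-- In both products below, a middle vertex can be passed through at most once: a second step
-- would give some vertex of the matching two partners.
theorem dcomp_eq_pullback_of_isRookDiag_left {R t : MDiag n} (hR : IsRookDiag R)
    (ht : IsMatching_s19 t) : dcomp R t = pullback (LiftRel (fun u m => R (inl u) (inr m)) Eq) t := by
  have reach (m m') := dreach_iff_of_not_inr_inr (m := m) (m' := m') hR.not_inr_inr ht
  have top_bot (u v) :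
      dcomp R t (inl u) (inr v) ↔ ∃ m, R (inl u) (inr m) ∧ t (inl m) (inr v) := by
    refine ⟨fun ⟨m, m', hm, hmm', hv⟩ => ?_, fun ⟨m, hm, hv⟩ => ⟨m, m, hm, .refl, hv⟩⟩
    rcases (reach m m').1 hmm' with rfl | hmm'
    · exact ⟨m, hm, hv⟩
    · exact absurd (ht.unique _ _ _ (ht.symm _ _ hmm') hv) inl_ne_inr
  funext x y
  apply propext
  rcases x with u | v <;> rcases y with u' | v'
  · simp only [dcomp, pullback_liftRel_inl_inl]
    constructor
    · rintro (h | ⟨hne, m, m', hm, hmm', hm'⟩)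
      · exact (hR.not_inl_inl u u' h).elim
      rcases (reach m m').1 hmm' with rfl | hmm'
      · exact (hne (inl_injective (hR.isMatching.leftUnique hm hm'))).elim
      · exact ⟨m, m', hm, hm', hmm'⟩
    · rintro ⟨m, m', hm, hm', hmm'⟩
      refine .inr ⟨?_, m, m', hm, (reach m m').2 (.inr hmm'), hm'⟩
      rintro rfl
      exact ht.irrefl _ (inr_injective (hR.isMatching.unique _ _ _ hm hm') ▸ hmm')
  · simpa using top_bot u v'
  · simp only [pullback_liftRel_inr_inl, exists_and_left, exists_eq_left']
    exact (top_bot u' v).trans (exists_congr fun m => and_congr_right fun _ =>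
      ⟨ht.symm _ _, ht.symm _ _⟩)
  · simp only [pullback_liftRel_inr_inr, exists_and_left, exists_eq_left']
    refine ⟨?_, Or.inl⟩
    rintro (h | ⟨hne, m, m', hv, hmm', hv'⟩)
    · exact h
    rcases (reach m m').1 hmm' with rfl | hmm'
    · exact (hne (inr_injective (ht.unique _ _ _ hv hv'))).elim
    · exact absurd (ht.unique _ _ _ hmm' hv) inl_ne_inr

theorem dcomp_eq_pullback_of_isRookDiag_right {s L : MDiag n} (hs : IsMatching_s19 s)
    (hL : IsRookDiag L) : dcomp s L = pullback (LiftRel Eq (fun v m => L (inr v) (inl m))) s := by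
  have reach (m m') := dreach_iff_of_not_inl_inl (m := m) (m' := m') hs hL.not_inl_inl
  have hLs := hL.isMatching.symm
  have top_bot (u v) :
      dcomp s L (inl u) (inr v) ↔ ∃ m, s (inl u) (inr m) ∧ L (inr v) (inl m) := by
    refine ⟨fun ⟨m, m', hm, hmm', hv⟩ => ?_,
      fun ⟨m, hm, hv⟩ => ⟨m, m, hm, .refl, hLs _ _ hv⟩⟩
    rcases (reach m m').1 hmm' with rfl | hmm'
    · exact ⟨m, hm, hLs _ _ hv⟩
    · exact absurd (hs.unique _ _ _ (hs.symm _ _ hm) hmm') inl_ne_inr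
  funext x y
  apply propext
  rcases x with u | v <;> rcases y with u' | v'
  · simp only [pullback_liftRel_inl_inl, exists_and_left, exists_eq_left']
    refine ⟨?_, Or.inl⟩
    rintro (h | ⟨hne, m, m', hm, hmm', hm'⟩)
    · exact h
    rcases (reach m m').1 hmm' with rfl | hmm'
    · exact (hne (inl_injective (hs.leftUnique hm hm'))).elim
    · exact absurd (hs.unique _ _ _ (hs.symm _ _ hm) hmm') inl_ne_inr
  · simp only [pullback_liftRel_inl_inr, exists_and_left, exists_eq_left']
    exact (top_bot u v').trans (exists_congr fun m => and_comm)
  · simp only [pullback_liftRel_inr_inl, exists_and_left, exists_eq_left']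
    exact (top_bot u' v).trans (exists_congr fun m => ⟨fun ⟨h, h'⟩ => ⟨h', hs.symm _ _ h⟩,
      fun ⟨h', h⟩ => ⟨hs.symm _ _ h, h'⟩⟩)
  · simp only [dcomp, pullback_liftRel_inr_inr]
    constructor
    · rintro (h | ⟨hne, m, m', hv, hmm', hv'⟩)
      · exact (hL.not_inr_inr v v' h).elim
      rcases (reach m m').1 hmm' with rfl | hmm'
      · exact (hne (inr_injective (hL.isMatching.unique _ _ _ hv hv'))).elim
      · exact ⟨m, m', hLs _ _ hv, hLs _ _ hv', hmm'⟩
    · rintro ⟨m, m', hv, hv', hmm'⟩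
      refine .inr ⟨?_, m, m', hLs _ _ hv, (reach m m').2 (.inr hmm'), hLs _ _ hv'⟩
      rintro rfl
      exact hs.irrefl _ (inl_injective (hL.isMatching.unique _ _ _ hv hv') ▸ hmm')

end Rook

section RookDiag

variable {n k : ℕ}

def rookDiag (f g : Fin k → Fin n) : MDiag n
  | inl a, inr b => ∃ i, f i = a ∧ g i = b
  | inr b, inl a => ∃ i, f i = a ∧ g i = b
  | _, _ => False

variable {f g : Fin k → Fin n}

theorem rookDiag_isRookDiag (hf : Function.Injective f) (hg : Function.Injective g) :
    IsRookDiag (rookDiag f g) where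
  isMatching :=
    { symm := by rintro (_ | _) (_ | _) h <;> exact h
      irrefl := by rintro (_ | _) h <;> exact h
      unique := by
        rintro (a | b) (_ | _) (_ | _) h h' <;> simp only [rookDiag] at h h' ⊢
        · obtain ⟨i, rfl, rfl⟩ := h
          obtain ⟨j, hj, rfl⟩ := h'
          rw [hf hj]
        · obtain ⟨i, rfl, rfl⟩ := h
          obtain ⟨j, rfl, hj⟩ := h'
          rw [hg hj] }
  not_inl_inl _ _ h := h
  not_inr_inr _ _ h := h

theorem rookDiag_nonCrossing (hf : StrictMono f) (hg : StrictMono g) :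
    NonCrossing (rookDiag f g) := by
  have edge : ∀ x y, rookDiag f g x y →
      ∃ i, (x = inl (f i) ∧ y = inr (g i)) ∨ (x = inr (g i) ∧ y = inl (f i)) := by
    rintro (_ | _) (_ | _) h <;> simp only [rookDiag] at h
    · obtain ⟨i, rfl, rfl⟩ := h; exact ⟨i, .inl ⟨rfl, rfl⟩⟩
    · obtain ⟨i, rfl, rfl⟩ := h; exact ⟨i, .inr ⟨rfl, rfl⟩⟩
  intro x y u v hxy huv h₁ h₂ h₃
  obtain ⟨i, ⟨rfl, rfl⟩ | ⟨rfl, rfl⟩⟩ := edge x y hxy <;>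
    obtain ⟨j, ⟨rfl, rfl⟩ | ⟨rfl, rfl⟩⟩ := edge u v huv <;>
    simp only [mpos] at h₁ h₂ h₃ <;>
    rcases lt_trichotomy i j with hij | rfl | hij <;>
    first
    | omega
    | have := hf hij; have := hg hij; rw [Fin.lt_def] at *; omega

theorem topSet_rookDiag : topSet (rookDiag f g) = Set.range f := by
  ext a
  refine ⟨?_, fun ⟨i, hi⟩ => ⟨inr (g i), i, hi, rfl⟩⟩
  rintro ⟨_ | _, h⟩
  exacts [h.elim, (h.imp fun _ => And.left)]

theorem dbotSet_rookDiag : dbotSet (rookDiag f g) = Set.range g := by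
  ext b
  refine ⟨?_, fun ⟨i, hi⟩ => ⟨inl (f i), i, rfl, hi⟩⟩
  rintro ⟨_ | _, h⟩
  exacts [(h.imp fun _ => And.right), h.elim]

theorem lt_iff_lt_of_rookDiag (hf : StrictMono f) (hg : StrictMono g) {a a' b b' : Fin n}
    (h : rookDiag f g (inl a) (inr b)) (h' : rookDiag f g (inl a') (inr b')) : a < a' ↔ b < b' := by
  obtain ⟨i, rfl, rfl⟩ := h
  obtain ⟨j, rfl, rfl⟩ := h'
  rw [hf.lt_iff_lt, hg.lt_iff_lt]

end RookDiag

section Enumeration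

variable {n : ℕ}

theorem Fin.val_le_of_strictMono {k : ℕ} {f : Fin k → Fin n} (hf : StrictMono f) (i : Fin k) :
    (i : ℕ) ≤ f i := by
  obtain ⟨i, hi⟩ := i
  induction i with
  | zero => exact Nat.zero_le _
  | succ i ih =>
    have step := hf (show (⟨i, by omega⟩ : Fin k) < ⟨i + 1, hi⟩ from Nat.lt_succ_self i)
    have := ih (by omega)
    rw [Fin.lt_def] at step
    simp only at this step ⊢
    omega

theorem Set.ncard_le_of_fin (S : Set (Fin n)) : S.ncard ≤ n :=
  (Set.ncard_le_card S).trans (by simp)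

noncomputable def sortedEnum (S : Set (Fin n)) : Fin S.ncard ↪o Fin n :=
  S.toFinite.toFinset.orderEmbOfFin (Set.ncard_eq_toFinset_card S).symm

theorem range_sortedEnum (S : Set (Fin n)) : Set.range (sortedEnum S) = S := by
  simp [sortedEnum, Finset.range_orderEmbOfFin]

end Enumeration

section Decomposition

variable {n : ℕ} (d : MDiag n)

noncomputable def rightRook : MDiag n :=
  rookDiag (sortedEnum (topSet d)) (Fin.castLE (topSet d).ncard_le_of_fin)

noncomputable def leftRook : MDiag n :=
  rookDiag (Fin.castLE (dbotSet d).ncard_le_of_fin) (sortedEnum (dbotSet d))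

theorem rightRook_isRookDiag : IsRookDiag (rightRook d) :=
  rookDiag_isRookDiag (sortedEnum _).injective (Fin.castLE_injective _)

theorem leftRook_isRookDiag : IsRookDiag (leftRook d) :=
  rookDiag_isRookDiag (Fin.castLE_injective _) (sortedEnum _).injective

theorem rightRook_isRPdiag : IsRPdiag (rightRook d) :=
  ⟨(rightRook_isRookDiag d).isMotzkin
      (rookDiag_nonCrossing (sortedEnum _).strictMono (Fin.strictMono_castLE _)),
    (rightRook_isRookDiag d).not_inl_inl, (rightRook_isRookDiag d).not_inr_inr,
    fun _ _ ⟨i, ha, hb⟩ => ha ▸ hb ▸ Fin.val_le_of_strictMono (sortedEnum _).strictMono i⟩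

theorem leftRook_isLPdiag : IsLPdiag (leftRook d) :=
  ⟨(leftRook_isRookDiag d).isMotzkin
      (rookDiag_nonCrossing (Fin.strictMono_castLE _) (sortedEnum _).strictMono),
    (leftRook_isRookDiag d).not_inl_inl, (leftRook_isRookDiag d).not_inr_inr,
    fun _ _ ⟨i, ha, hb⟩ => ha ▸ hb ▸ Fin.val_le_of_strictMono (sortedEnum _).strictMono i⟩

theorem topSet_rightRook : topSet (rightRook d) = topSet d :=
  topSet_rookDiag.trans (range_sortedEnum _)

theorem dbotSet_rightRook : dbotSet (rightRook d) = {b : Fin n | (b : ℕ) < (topSet d).ncard} :=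
  dbotSet_rookDiag.trans (Fin.range_castLE _)

theorem topSet_leftRook : topSet (leftRook d) = {a : Fin n | (a : ℕ) < (dbotSet d).ncard} :=
  topSet_rookDiag.trans (Fin.range_castLE _)

theorem dbotSet_leftRook : dbotSet (leftRook d) = dbotSet d :=
  dbotSet_rookDiag.trans (range_sortedEnum _)

-- Moves the `i`-th vertex of `τ(d)` to top vertex `i` and the `i`-th vertex of `β(d)` to
-- bottom vertex `i`.
noncomputable def compress : MVert n → MVert n → Prop :=
  LiftRel (fun a p => rightRook d (inl a) (inr p)) (fun b q => leftRook d (inr b) (inl q))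

theorem compress_biUnique : Relator.BiUnique (compress d) :=
  (rightRook_isRookDiag d).biUnique_inl_inr.sumLiftRel (leftRook_isRookDiag d).biUnique_inr_inl

theorem ncard_matched_eq :
    {x | ∃ y, d x y}.ncard = (topSet d).ncard + (dbotSet d).ncard := by
  have : {x | ∃ y, d x y} = inl '' topSet d ∪ inr '' dbotSet d := by
    ext (a | b) <;> simp [topSet, dbotSet]
  rw [this, Set.ncard_union_eq, Set.ncard_image_of_injective _ inl_injective,
    Set.ncard_image_of_injective _ inr_injective]
  exact Set.disjoint_left.2 (by rintro _ ⟨a, -, rfl⟩ ⟨b, -, h⟩; exact inr_ne_inl h)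

-- The empty vertices of `d` are pushed to the right end of both rows, where they form a
-- contiguous interval of the boundary; that interval is then filled with nested arcs.
noncomputable def tlFactor : MDiag n :=
  pullback (flip (compress d)) d ⊔ rainbow n (topSet d).ncard (2 * n - (dbotSet d).ncard)

variable {d}

theorem mpos_lt_mpos_iff_of_compress {x x' y y' : MVert n} (hx : compress d x x')
    (hy : compress d y y') : mpos n x < mpos n y ↔ mpos n x' < mpos n y' :=
  mpos_lt_mpos_iff_of_liftRel
    (fun _ _ _ _ => lt_iff_lt_of_rookDiag (sortedEnum _).strictMono (Fin.strictMono_castLE _))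
    (fun _ _ _ _ h h' =>
      (lt_iff_lt_of_rookDiag (Fin.strictMono_castLE _) (sortedEnum _).strictMono h h').symm)
    hx hy

theorem exists_compress_iff_matched (x : MVert n) : (∃ x', compress d x x') ↔ ∃ y, d x y := by
  rcases x with a | b
  · change (∃ x', LiftRel _ _ (inl a) x') ↔ a ∈ topSet d
    rw [← range_sortedEnum (topSet d)]
    simp [rightRook, rookDiag, Sum.exists]
  · change (∃ x', LiftRel _ _ (inr b) x') ↔ b ∈ dbotSet d
    rw [← range_sortedEnum (dbotSet d)]
    simp [leftRook, rookDiag, Sum.exists]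

theorem exists_compress_iff (x' : MVert n) :
    (∃ x, compress d x x') ↔
      mpos n x' ∉ Set.Ico (topSet d).ncard (2 * n - (dbotSet d).ncard) := by
  have := (topSet d).ncard_le_of_fin
  have := (dbotSet d).ncard_le_of_fin
  rcases x' with p | q <;>
    simp only [compress, rightRook, leftRook, rookDiag, Sum.exists, liftRel_inl_inl,
      liftRel_inr_inr, not_liftRel_inl_inr, not_liftRel_inr_inl, exists_false, or_false,
      false_or, exists_and_left, exists_comm (α := Fin n), exists_eq_left', exists_eq',
      and_true, ← Set.mem_range, Fin.range_castLE, Set.mem_ofPred_eq, Set.mem_Ico, mpos] <;>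
    omega

theorem tlFactor_isTLdiag (hd : IsMotzkin d) : IsTLdiag (tlFactor d) := by
  set I := Set.Ico (topSet d).ncard (2 * n - (dbotSet d).ncard)
  have hout (x y) (h : pullback (flip (compress d)) d x y) : mpos n x ∉ I ∧ mpos n y ∉ I :=
    let ⟨x₀, y₀, hx, hy, _⟩ := h
    ⟨(exists_compress_iff x).1 ⟨x₀, hx⟩, (exists_compress_iff y).1 ⟨y₀, hy⟩⟩
  have hin (x y) : rainbow n _ _ x y → mpos n x ∈ I ∧ mpos n y ∈ I := mpos_mem_Ico_of_rainbow
  have hbot := (dbotSet d).ncard_le_of_fin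
  have heven : Even ((topSet d).ncard + (2 * n - (dbotSet d).ncard)) := by
    obtain ⟨k, hk⟩ := ncard_matched_eq d ▸ hd.isMatching.even_ncard_matched
    exact ⟨k + n - (dbotSet d).ncard, by omega⟩
  have hmatch : IsMatching_s19 (tlFactor d) :=
    (hd.isMatching.pullback (compress_biUnique d).flip).sup (rainbow_isMatching heven)
      fun x y z h h' => (hout x y h).1 (hin x z h').1
  refine ⟨⟨hmatch.symm, hmatch.irrefl, hmatch.unique, ?_⟩, fun x => ?_⟩
  · exact (hd.2.2.2.pullback fun _ _ _ _ hx hy => (mpos_lt_mpos_iff_of_compress hx hy).symm).sup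
      rainbow_nonCrossing Set.ordConnected_Ico hout hin
  by_cases hx : mpos n x ∈ I
  · obtain ⟨y, hy⟩ := exists_rainbow (by omega) hx
    exact ⟨y, .inr hy⟩
  · obtain ⟨x₀, hx₀⟩ := (exists_compress_iff x).2 hx
    obtain ⟨y₀, hy₀⟩ := (exists_compress_iff_matched x₀).1 ⟨x, hx₀⟩
    obtain ⟨y, hy⟩ := (exists_compress_iff_matched y₀).2 ⟨x₀, hd.1 _ _ hy₀⟩
    exact ⟨y, .inl ⟨x₀, y₀, hx₀, hy, hy₀⟩⟩

theorem dcomp_rightRook_tlFactor_leftRook (hd : IsMotzkin d) :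
    dcomp (dcomp (rightRook d) (tlFactor d)) (leftRook d) = d := by
  have ht : IsMatching_s19 (tlFactor d) := (tlFactor_isTLdiag hd).1.isMatching
  have hr := rightRook_isRookDiag d
  have hrt : IsMatching_s19 (dcomp (rightRook d) (tlFactor d)) := by
    rw [dcomp_eq_pullback_of_isRookDiag_left hr ht]
    exact ht.pullback (hr.biUnique_inl_inr.sumLiftRel Relator.biUnique_eq)
  rw [dcomp_eq_pullback_of_isRookDiag_right hrt (leftRook_isRookDiag d),
    dcomp_eq_pullback_of_isRookDiag_left hr ht, pullback_pullback, liftRel_comp_liftRel, eq_comp,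
    comp_eq]
  change pullback (compress d) (tlFactor d) = d
  rw [tlFactor, pullback_sup_eq_left, pullback_pullback_flip (compress_biUnique d).1 hd.1]
  · exact fun x y hxy => (exists_compress_iff_matched x).2 ⟨y, hxy⟩
  · exact fun x x' _ hx h => (exists_compress_iff x').1 ⟨x, hx⟩ (mpos_mem_Ico_of_rainbow h).1

end Decomposition

/-- Every Motzkin diagram `d` factors as `d = r · t · l` with `r ∈ RP_n`, `t ∈ TL_n`,
`l ∈ LP_n`, where `r` is the unique right planar rook diagram with top set `τ(d)` and
bottom set `{1, …, |τ(d)|}`, and `l` is the unique left planar rook diagram with bottom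
set `β(d)` and top set `{1, …, |β(d)|}`. -/
theorem motzkin_rtl_decomposition (n : ℕ) (d : MDiag n) (hd : IsMotzkin d) :
    ∃ r t l : MDiag n, IsRPdiag r ∧ IsTLdiag t ∧ IsLPdiag l ∧
      d = dcomp (dcomp r t) l ∧
      topSet r = topSet d ∧
      dbotSet r = {b : Fin n | (b : ℕ) < (topSet d).ncard} ∧
      topSet l = {a : Fin n | (a : ℕ) < (dbotSet d).ncard} ∧
      dbotSet l = dbotSet d :=
  ⟨rightRook d, tlFactor d, leftRook d, rightRook_isRPdiag d, tlFactor_isTLdiag hd,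
    leftRook_isLPdiag d, (dcomp_rightRook_tlFactor_leftRook hd).symm, topSet_rightRook d,
    dbotSet_rightRook d, topSet_leftRook d, dbotSet_leftRook d⟩
end
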